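/- arXiv:2011.10195 — 5 statements merged into one kernel-verified Lean document; each statement's English description precedes it below -/
import Mathlib

section
/- Let X_1, X_2, … be identically distributed real random variables with common continuous cdf F, and suppose that for some p ≥ 1 and some α ∈ (1, p] one has E(|X_1|^{p/α}) < ∞. Let a_X = sup{x : F(x)=0}, b_X = inf{x : F(x)=1}, and suppose h_0 : ℝ → ℝ is absolutely continuous on [a_X, b_X] with Radon–Nikodym derivative h_0* satisfying ∫_{a_X}^{b_X} |h_0*(x)|^{α/(α−1)} dx < ∞. Then B⁰_{n,p} := n^{-1/p} Σ_{t=2}^n |h_0(X_{t:n}) − h_0(X_{t-1:n})| is bounded in probability as n → ∞, where X_{1:n} < ⋯ < X_{n:n} denote the order statistics of X_1, …, X_n. -/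
open MeasureTheory ProbabilityTheory Filter
open scoped Classical

/-- The `t`-th order statistic (1-based) of `X 1, …, X n`. -/
noncomputable def orderStat {Ω : Type*} (X : ℕ → Ω → ℝ) (n t : ℕ) (ω : Ω) : ℝ :=
  (List.insertionSort (· ≤ ·) ((List.range n).map fun s => X (s + 1) ω)).getD (t - 1) 0

/-- The cumulative distribution function of a random variable `X` under `P`. -/
noncomputable def cdfOf {Ω : Type*} [MeasurableSpace Ω] (P : Measure Ω) (X : Ω → ℝ) : ℝ → ℝ :=
  fun x => (P {ω | X ω ≤ x}).toReal

/-- Lower endpoint `a_X = sup {x : F x = 0}` of the support of a cdf `F`. -/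
noncomputable def lowerEnd (F : ℝ → ℝ) : EReal :=
  sSup ((fun x : ℝ => (x : EReal)) '' {x | F x = 0})

/-- Upper endpoint `b_X = inf {x : F x = 1}` of the support of a cdf `F`. -/
noncomputable def upperEnd (F : ℝ → ℝ) : EReal :=
  sInf ((fun x : ℝ => (x : EReal)) '' {x | F x = 1})

/-- `Z n` is bounded in probability (O_P(1)). -/
def BoundedInProb {Ω : Type*} [MeasurableSpace Ω] (P : Measure Ω) (Z : ℕ → Ω → ℝ) : Prop :=
  ∀ ε : ℝ, 0 < ε → ∃ M : ℝ, 0 < M ∧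
    ∀ᶠ n in atTop, P {ω | M < |Z n ω|} ≤ ENNReal.ofReal ε

/-!
Almost surely every `X t` lies in `[a_X, b_X]`, where `h0` is absolutely continuous, so the sum
telescopes to at most `∫ |h0*|` over `[X_{1:n}, X_{n:n}]`. Hölder's inequality bounds this by
`‖h0*‖_{α/(α-1)} (X_{n:n} - X_{1:n})^{1/α} ≤ ‖h0*‖_{α/(α-1)} (2 max_{t ≤ n} |X t|)^{1/α}`.
So `B⁰_{n,p}` can only be large when `max_{t ≤ n} |X t|` is large compared with `n^{α/p}`, and a
union bound with Markov's inequality for `|X 1|^{p/α}` makes that unlikely uniformly in `n`.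
-/

section OrderStatistics

variable {Ω : Type*} (X : ℕ → Ω → ℝ) (n : ℕ) (ω : Ω)

theorem orderStat_eq_getElem {t : ℕ} (ht : t ∈ Set.Icc 1 n) :
    ∃ h, orderStat X n t ω =
      (List.insertionSort (· ≤ ·) ((List.range n).map fun s => X (s + 1) ω))[t - 1]'h :=
  ⟨by obtain ⟨h1, h2⟩ := ht; simp; omega, List.getD_eq_getElem _ _ _⟩

theorem orderStat_monotoneOn : MonotoneOn (fun t => orderStat X n t ω) (Set.Icc 1 n) := by
  intro s hs t ht hst
  obtain ⟨hs', es⟩ := orderStat_eq_getElem X n ω hs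
  obtain ⟨ht', et⟩ := orderStat_eq_getElem X n ω ht
  simp only [es, et]
  exact (List.pairwise_insertionSort _ _).rel_get_of_le (a := ⟨s - 1, hs'⟩) (b := ⟨t - 1, ht'⟩)
    (by simp only [Fin.mk_le_mk]; omega)

theorem exists_eq_orderStat {t : ℕ} (ht : t ∈ Set.Icc 1 n) :
    ∃ s ∈ Set.Icc 1 n, X s ω = orderStat X n t ω := by
  obtain ⟨h, e⟩ := orderStat_eq_getElem X n ω ht
  have hmem := List.getElem_mem h
  rw [(List.perm_insertionSort _ _).mem_iff, List.mem_map] at hmem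
  obtain ⟨s, hs, hval⟩ := hmem
  exact ⟨s + 1, by simp at hs; constructor <;> omega, hval.trans e.symm⟩

theorem orderStat_sub_orderStat_le {c : ℝ} (hc : ∀ s ∈ Set.Icc 1 n, |X s ω| ≤ c) (hn : 1 ≤ n) :
    orderStat X n n ω - orderStat X n 1 ω ≤ 2 * c := by
  obtain ⟨s, hs, es⟩ := exists_eq_orderStat X n ω ⟨hn, le_rfl⟩
  obtain ⟨s', hs', es'⟩ := exists_eq_orderStat X n ω ⟨le_rfl, hn⟩
  have := (abs_le.mp (hc s hs)).2
  have := (abs_le.mp (hc s' hs')).1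
  linarith

end OrderStatistics

section SupportEndpoints

variable {Ω : Type*} [MeasurableSpace Ω] (P : Measure Ω) (Y : Ω → ℝ)

theorem cdfOf_mono [IsFiniteMeasure P] : Monotone (cdfOf P Y) := fun _ _ huv =>
  ENNReal.toReal_mono (measure_ne_top P _) (measure_mono fun _ hω => le_trans hω huv)

theorem cdfOf_le_one [IsProbabilityMeasure P] (x : ℝ) : cdfOf P Y x ≤ 1 :=
  measureReal_le_one

theorem ae_lt_of_cdfOf_eq_zero [IsFiniteMeasure P] {x : ℝ} (hx : cdfOf P Y x = 0) :
    ∀ᵐ ω ∂P, x < Y ω := by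
  rw [ae_iff]
  simpa only [not_lt, cdfOf, measureReal_def, ENNReal.toReal_eq_zero_iff, measure_ne_top,
    or_false] using hx

theorem ae_le_of_cdfOf_eq_one [IsProbabilityMeasure P] (hY : AEMeasurable Y P) {x : ℝ}
    (hx : cdfOf P Y x = 1) : ∀ᵐ ω ∂P, Y ω ≤ x := by
  have hs : NullMeasurableSet {ω | Y ω ≤ x} P := hY.nullMeasurable measurableSet_Iic
  have := (prob_compl_eq_zero_iff₀ hs).mpr ((ENNReal.toReal_eq_one_iff _).mp hx)
  exact ae_iff.mpr (by simpa only [Set.compl_def, Set.mem_ofPred_eq] using this)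

theorem ae_lowerEnd_le [IsFiniteMeasure P] : ∀ᵐ ω ∂P, lowerEnd (cdfOf P Y) ≤ Y ω := by
  have : ∀ᵐ ω ∂P, ∀ q : ℚ, cdfOf P Y q = 0 → (q : ℝ) < Y ω :=
    ae_all_iff.mpr fun q => by
      by_cases hq : cdfOf P Y q = 0
      · filter_upwards [ae_lt_of_cdfOf_eq_zero P Y hq] with ω h _ using h
      · exact ae_of_all _ fun ω h => absurd h hq
  filter_upwards [this] with ω hω
  refine sSup_le ?_
  rintro _ ⟨x, hx, rfl⟩
  refine EReal.coe_le_coe_iff.mpr (le_of_forall_rat_lt_imp_le fun q hq => (hω q ?_).le)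
  exact le_antisymm (hx ▸ cdfOf_mono P Y hq.le) measureReal_nonneg

theorem ae_le_upperEnd [IsProbabilityMeasure P] (hY : AEMeasurable Y P) :
    ∀ᵐ ω ∂P, (Y ω : EReal) ≤ upperEnd (cdfOf P Y) := by
  have : ∀ᵐ ω ∂P, ∀ q : ℚ, cdfOf P Y q = 1 → Y ω ≤ q :=
    ae_all_iff.mpr fun q => by
      by_cases hq : cdfOf P Y q = 1
      · filter_upwards [ae_le_of_cdfOf_eq_one P Y hY hq] with ω h _ using h
      · exact ae_of_all _ fun ω h => absurd h hq
  filter_upwards [this] with ω hω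
  refine le_sInf ?_
  rintro _ ⟨x, hx, rfl⟩
  refine EReal.coe_le_coe_iff.mpr (le_of_forall_lt_rat_imp_le fun q hq => hω q ?_)
  exact le_antisymm (cdfOf_le_one P Y q) (hx ▸ cdfOf_mono P Y hq.le)

theorem ae_forall_mem_Icc_lowerEnd_upperEnd [IsProbabilityMeasure P] (X : ℕ → Ω → ℝ)
    (hid : ∀ t, 1 ≤ t → IdentDistrib (X t) (X 1) P P) :
    ∀ᵐ ω ∂P, ∀ t, 1 ≤ t →
      (X t ω : EReal) ∈ Set.Icc (lowerEnd (cdfOf P (X 1))) (upperEnd (cdfOf P (X 1))) := by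
  have hmeas : MeasurableSet ((↑) ⁻¹' Set.Icc (lowerEnd (cdfOf P (X 1)))
      (upperEnd (cdfOf P (X 1))) : Set ℝ) := measurable_coe_real_ereal measurableSet_Icc
  have hX1 : ∀ᵐ ω ∂P, (X 1 ω : EReal) ∈ Set.Icc (lowerEnd (cdfOf P (X 1)))
      (upperEnd (cdfOf P (X 1))) := by
    filter_upwards [ae_lowerEnd_le P (X 1), ae_le_upperEnd P (X 1) (hid 1 le_rfl).aemeasurable_snd]
      with ω h₁ h₂
    exact ⟨h₁, h₂⟩
  refine ae_all_iff.mpr fun t => ?_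
  by_cases ht : 1 ≤ t
  · filter_upwards [(hid t ht).symm.ae_mem_snd hmeas hX1] with ω hω _ using hω
  · exact ae_of_all _ fun _ h => absurd h ht

end SupportEndpoints

theorem setIntegral_Ioc_abs_le {g : ℝ → ℝ} {β α : ℝ} (hβα : β.HolderConjugate α)
    (hg : Measurable g) {S : Set ℝ} (hS : IntegrableOn (fun x => |g x| ^ β) S)
    {u v : ℝ} (huv : u ≤ v) (hsub : Set.Ioc u v ⊆ S) :
    ∫ x in Set.Ioc u v, |g x| ≤ (∫ x in S, |g x| ^ β) ^ (1 / β) * (v - u) ^ (1 / α) := by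
  have hgLp : MemLp (fun x => |g x|) (ENNReal.ofReal β) (volume.restrict (Set.Ioc u v)) := by
    refine (integrable_norm_rpow_iff hg.abs.aestronglyMeasurable (by simp [hβα.pos])
      ENNReal.ofReal_ne_top).mp ?_
    simpa only [IntegrableOn, Real.norm_eq_abs, abs_abs, ENNReal.toReal_ofReal hβα.nonneg] using
      hS.mono_set hsub
  have holder := integral_mul_le_Lp_mul_Lq_of_nonneg hβα (ae_of_all _ fun x => abs_nonneg (g x))
    (ae_of_all _ fun _ => zero_le_one) hgLp (memLp_const (1 : ℝ))
  simp only [mul_one, Real.one_rpow, integral_const, smul_eq_mul, measureReal_restrict_apply_univ,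
    Real.volume_real_Ioc_of_le huv] at holder
  refine holder.trans (mul_le_mul_of_nonneg_right ?_ (by positivity))
  refine Real.rpow_le_rpow (integral_nonneg fun _ => by positivity) ?_ (by simp [hβα.nonneg])
  exact setIntegral_mono_set hS (ae_of_all _ fun _ => by positivity) hsub.eventuallyLE

theorem abs_sub_le_intervalIntegral_abs {f g : ℝ → ℝ} {u v : ℝ} (huv : u ≤ v)
    (hf : f v - f u = ∫ x in Set.Icc u v, g x) : |f v - f u| ≤ ∫ x in u..v, |g x| := by
  rw [hf, intervalIntegral.integral_of_le huv, ← integral_Icc_eq_integral_Ioc]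
  exact abs_integral_le_integral_abs

theorem sum_abs_sub_le_intervalIntegral {f g : ℝ → ℝ} {S : Set ℝ}
    (hg : ∀ u ∈ S, ∀ v ∈ S, IntervalIntegrable g volume u v)
    (hfg : ∀ u ∈ S, ∀ v ∈ S, u ≤ v → |f v - f u| ≤ ∫ y in u..v, g y)
    {n : ℕ} {x : ℕ → ℝ} (hx : MonotoneOn x (Set.Icc 1 n)) (hxS : ∀ t ∈ Set.Icc 1 n, x t ∈ S)
    (hn : 1 ≤ n) :
    ∑ t ∈ Finset.Icc 2 n, |f (x t) - f (x (t - 1))| ≤ ∫ y in x 1..x n, g y := by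
  induction n, hn using Nat.le_induction with
  | base => simp
  | succ n hn ih =>
    have hsub : Set.Icc 1 n ⊆ Set.Icc 1 (n + 1) := Set.Icc_subset_Icc_right n.le_succ
    have h1 : x 1 ∈ S := hxS 1 ⟨le_rfl, by omega⟩
    have hn' : x n ∈ S := hxS n ⟨hn, by omega⟩
    have hn1 : x (n + 1) ∈ S := hxS (n + 1) ⟨by omega, le_rfl⟩
    rw [Finset.sum_Icc_succ_top (by omega), Nat.add_sub_cancel,
      ← intervalIntegral.integral_add_adjacent_intervals (hg _ h1 _ hn') (hg _ hn' _ hn1)]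
    exact add_le_add (ih (hx.mono hsub) fun t ht => hxS t (hsub ht))
      (hfg _ hn' _ hn1 (hx ⟨hn, by omega⟩ ⟨by omega, le_rfl⟩ n.le_succ))

theorem sum_abs_sub_le_rpow {h h' : ℝ → ℝ} {β α : ℝ} (hβα : β.HolderConjugate α)
    {S : Set ℝ} (hS : S.OrdConnected) (hmeas : Measurable h')
    (hint : IntegrableOn (fun x => |h' x| ^ β) S)
    (hAC : ∀ u ∈ S, ∀ v ∈ S, u ≤ v → h v - h u = ∫ x in Set.Icc u v, h' x)
    {n : ℕ} {x : ℕ → ℝ} (hx : MonotoneOn x (Set.Icc 1 n)) (hxS : ∀ t ∈ Set.Icc 1 n, x t ∈ S)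
    (hn : 1 ≤ n) :
    ∑ t ∈ Finset.Icc 2 n, |h (x t) - h (x (t - 1))| ≤
      (∫ x in S, |h' x| ^ β) ^ (1 / β) * (x n - x 1) ^ (1 / α) := by
  have hloc : ∀ u ∈ S, ∀ v ∈ S, u ≤ v → IntegrableOn (fun x => |h' x|) (Set.Icc u v) := by
    intro u hu v hv _
    have hβ : IntegrableOn (fun x => ‖|h' x|‖ ^ β) (Set.Icc u v) := by
      simpa only [Real.norm_eq_abs, abs_abs] using hint.mono_set (hS.out hu hv)
    simpa only [IntegrableOn, Real.norm_eq_abs, abs_abs, Real.rpow_one] using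
      integrable_norm_rpow_of_le hmeas.abs.aestronglyMeasurable zero_le_one hβα.nonneg hβα.lt.le hβ
  have hII : ∀ u ∈ S, ∀ v ∈ S, IntervalIntegrable (fun x => |h' x|) volume u v := by
    intro u hu v hv
    rcases le_total u v with huv | hvu
    · exact (intervalIntegrable_iff_integrableOn_Icc_of_le huv).mpr (hloc u hu v hv huv)
    · exact ((intervalIntegrable_iff_integrableOn_Icc_of_le hvu).mpr (hloc v hv u hu hvu)).symm
  have h1n : x 1 ≤ x n := hx ⟨le_rfl, hn⟩ ⟨hn, le_rfl⟩ hn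
  calc ∑ t ∈ Finset.Icc 2 n, |h (x t) - h (x (t - 1))|
      ≤ ∫ y in x 1..x n, |h' y| := sum_abs_sub_le_intervalIntegral hII
        (fun u hu v hv huv => abs_sub_le_intervalIntegral_abs huv (hAC u hu v hv huv)) hx hxS hn
    _ = ∫ y in Set.Ioc (x 1) (x n), |h' y| := intervalIntegral.integral_of_le h1n
    _ ≤ _ := setIntegral_Ioc_abs_le hβα hmeas hint h1n
        (Set.Ioc_subset_Icc_self.trans (hS.out (hxS 1 ⟨le_rfl, hn⟩) (hxS n ⟨hn, le_rfl⟩)))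

theorem sum_abs_sub_orderStat_le {Ω : Type*} {X : ℕ → Ω → ℝ} {n : ℕ} {ω : Ω} {c : ℝ}
    {h h' : ℝ → ℝ} {β α : ℝ} (hβα : β.HolderConjugate α) {S : Set ℝ} (hS : S.OrdConnected)
    (hmeas : Measurable h') (hint : IntegrableOn (fun x => |h' x| ^ β) S)
    (hAC : ∀ u ∈ S, ∀ v ∈ S, u ≤ v → h v - h u = ∫ x in Set.Icc u v, h' x)
    (hXS : ∀ t ∈ Set.Icc 1 n, X t ω ∈ S) (hXc : ∀ t ∈ Set.Icc 1 n, |X t ω| ≤ c) (hn : 1 ≤ n) :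
    ∑ t ∈ Finset.Icc 2 n, |h (orderStat X n t ω) - h (orderStat X n (t - 1) ω)| ≤
      (∫ x in S, |h' x| ^ β) ^ (1 / β) * (2 * c) ^ (1 / α) := by
  have hmem : ∀ t ∈ Set.Icc 1 n, orderStat X n t ω ∈ S := fun t ht => by
    obtain ⟨s, hs, es⟩ := exists_eq_orderStat X n ω ht
    exact es ▸ hXS s hs
  refine (sum_abs_sub_le_rpow hβα hS hmeas hint hAC (orderStat_monotoneOn X n ω) hmem hn).trans ?_
  refine mul_le_mul_of_nonneg_left ?_ (by positivity)
  exact Real.rpow_le_rpow (sub_nonneg.mpr (orderStat_monotoneOn X n ω ⟨le_rfl, hn⟩ ⟨hn, le_rfl⟩ hn))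
    (orderStat_sub_orderStat_le X n ω hXc hn) (by simp [hβα.symm.nonneg])

section Tightness

variable {Ω : Type*} [MeasurableSpace Ω] (P : Measure Ω) [IsFiniteMeasure P]

theorem measure_lt_abs_le {Y : Ω → ℝ} {r : ℝ} (hr : 0 < r)
    (hY : Integrable (fun ω => |Y ω| ^ r) P) {c : ℝ} (hc : 0 < c) :
    P {ω | c < |Y ω|} ≤ ENNReal.ofReal ((∫ ω, |Y ω| ^ r ∂P) / c ^ r) := by
  have hcr : 0 < c ^ r := Real.rpow_pos_of_pos hc r
  have hsub : {ω | c < |Y ω|} ⊆ {ω | c ^ r ≤ |Y ω| ^ r} := fun ω hω =>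
    Real.rpow_le_rpow hc.le (le_of_lt hω) hr.le
  refine (measure_mono hsub).trans ?_
  rw [ENNReal.le_ofReal_iff_toReal_le (measure_ne_top P _) (by positivity), le_div_iff₀ hcr,
    mul_comm]
  exact mul_meas_ge_le_integral_of_nonneg (ae_of_all P fun ω => by positivity) hY _

theorem measure_exists_lt_abs_le (X : ℕ → Ω → ℝ)
    (hid : ∀ t, 1 ≤ t → IdentDistrib (X t) (X 1) P P) {r : ℝ} (hr : 0 < r)
    (hmom : Integrable (fun ω => |X 1 ω| ^ r) P) (n : ℕ) {c : ℝ} (hc : 0 < c) :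
    P {ω | ∃ t ∈ Set.Icc 1 n, c < |X t ω|} ≤
      ENNReal.ofReal (n * (∫ ω, |X 1 ω| ^ r ∂P) / c ^ r) := by
  have hunion : {ω | ∃ t ∈ Set.Icc 1 n, c < |X t ω|} = ⋃ t ∈ Finset.Icc 1 n, {ω | c < |X t ω|} := by
    ext ω
    simp
  have hsame : ∀ t ∈ Finset.Icc 1 n, P {ω | c < |X t ω|} = P {ω | c < |X 1 ω|} := fun t ht =>
    (hid t (Finset.mem_Icc.mp ht).1).measure_mem_eq
      (measurableSet_lt measurable_const measurable_abs)
  calc P {ω | ∃ t ∈ Set.Icc 1 n, c < |X t ω|}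
      ≤ ∑ t ∈ Finset.Icc 1 n, P {ω | c < |X t ω|} := hunion ▸ measure_biUnion_finset_le _ _
    _ = n • P {ω | c < |X 1 ω|} := by rw [Finset.sum_congr rfl hsame]; simp
    _ ≤ n • ENNReal.ofReal ((∫ ω, |X 1 ω| ^ r ∂P) / c ^ r) :=
        nsmul_le_nsmul_right (measure_lt_abs_le P hr hmom hc) n
    _ = _ := by rw [← ENNReal.ofReal_nsmul, nsmul_eq_mul, mul_div_assoc]

theorem boundedInProb_of_ae_abs_le (X : ℕ → Ω → ℝ)
    (hid : ∀ t, 1 ≤ t → IdentDistrib (X t) (X 1) P P) {r : ℝ} (hr : 0 < r)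
    (hmom : Integrable (fun ω => |X 1 ω| ^ r) P) (Z : ℕ → Ω → ℝ) (D γ : ℝ)
    (hZ : ∀ n, 1 ≤ n → ∀ c, 0 < c →
      ∀ᵐ ω ∂P, (∀ t ∈ Set.Icc 1 n, |X t ω| ≤ c) → |Z n ω| ≤ D * (c ^ r / n) ^ γ) :
    BoundedInProb P Z := by
  intro ε hε
  set E := ∫ ω, |X 1 ω| ^ r ∂P
  have hE : 0 ≤ E := integral_nonneg fun ω => by positivity
  set L := (E + 1) / ε
  have hL : 0 < L := by positivity
  refine ⟨|D * L ^ γ| + 1, by positivity, ?_⟩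
  filter_upwards [eventually_ge_atTop 1] with n hn
  have hn' : (0 : ℝ) < n := by exact_mod_cast hn
  set c := (n * L) ^ (1 / r)
  have hc : 0 < c := by positivity
  -- With `c ^ r = n * L`, the union bound gives `E / L ≤ ε` and the bound on `Z` becomes
  -- `D * L ^ γ`, both free of `n`.
  have hcr : c ^ r = n * L := by
    rw [← Real.rpow_mul (by positivity), one_div_mul_cancel hr.ne', Real.rpow_one]
  calc P {ω | |D * L ^ γ| + 1 < |Z n ω|}
      ≤ P {ω | ∃ t ∈ Set.Icc 1 n, c < |X t ω|} := by
        refine measure_mono_ae ((hZ n hn c hc).mono fun ω hω hlt => ?_)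
        change |D * L ^ γ| + 1 < |Z n ω| at hlt
        show ∃ t ∈ Set.Icc 1 n, c < |X t ω|
        by_contra! hall
        have hbound := hω hall
        rw [hcr, mul_div_cancel_left₀ L hn'.ne'] at hbound
        linarith [le_abs_self (D * L ^ γ)]
    _ ≤ ENNReal.ofReal (n * E / c ^ r) := measure_exists_lt_abs_le P X hid hr hmom n hc
    _ ≤ ENNReal.ofReal ε := by
        refine ENNReal.ofReal_le_ofReal ?_
        rw [hcr, mul_div_mul_left E L hn'.ne', div_div_eq_mul_div, div_le_iff₀ (by positivity)]
        nlinarith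

end Tightness

theorem rpow_neg_one_div_mul_rpow_one_div {p α n c : ℝ} (hp : 0 < p) (hn : 0 < n)
    (hc : 0 ≤ c) :
    n ^ (-(1 / p)) * (2 * c) ^ (1 / α) = 2 ^ (1 / α) * (c ^ (p / α) / n) ^ (1 / p) := by
  rw [Real.mul_rpow zero_le_two hc, Real.div_rpow (by positivity) hn.le, ← Real.rpow_mul hc,
    Real.rpow_neg hn.le]
  field_simp

theorem stmt_2_general {Ω : Type*} [MeasurableSpace Ω] (P : Measure Ω) [IsProbabilityMeasure P]
    (X : ℕ → Ω → ℝ)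
    (hid : ∀ t : ℕ, 1 ≤ t → IdentDistrib (X t) (X 1) P P)
    (p α : ℝ) (hp : 1 ≤ p) (hα : 1 < α)
    (hmom : Integrable (fun ω => |X 1 ω| ^ (p / α)) P)
    (h0 h0star : ℝ → ℝ) (hmeas0 : Measurable h0star)
    (hAC : ∀ u v : ℝ, u ≤ v →
      lowerEnd (cdfOf P (X 1)) ≤ (u : EReal) → (v : EReal) ≤ upperEnd (cdfOf P (X 1)) →
      h0 v - h0 u = ∫ x in Set.Icc u v, h0star x)
    (hint : IntegrableOn (fun x => |h0star x| ^ (α / (α - 1)))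
      {x : ℝ | lowerEnd (cdfOf P (X 1)) ≤ (x : EReal) ∧
        (x : EReal) ≤ upperEnd (cdfOf P (X 1))} volume) :
    BoundedInProb P (fun n ω => (n : ℝ) ^ (-(1 / p)) *
      ∑ t ∈ Finset.Icc 2 n, |h0 (orderStat X n t ω) - h0 (orderStat X n (t - 1) ω)|) := by
  set S : Set ℝ := {x : ℝ | lowerEnd (cdfOf P (X 1)) ≤ (x : EReal) ∧
    (x : EReal) ≤ upperEnd (cdfOf P (X 1))}
  have hS : S.OrdConnected :=
    Set.ordConnected_Icc.preimage_mono (fun _ _ h => EReal.coe_le_coe_iff.mpr h)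
  have hgood := ae_forall_mem_Icc_lowerEnd_upperEnd P X hid
  have hβα : (α / (α - 1)).HolderConjugate α := (Real.HolderConjugate.conjExponent hα).symm
  refine boundedInProb_of_ae_abs_le P X hid (by positivity) hmom _
    ((∫ x in S, |h0star x| ^ (α / (α - 1))) ^ (1 / (α / (α - 1))) * 2 ^ (1 / α)) (1 / p)
    fun n hn c hc => ?_
  filter_upwards [hgood] with ω hω hXc
  have hsum := sum_abs_sub_orderStat_le (h := h0) hβα hS hmeas0 hint
    (fun u hu v hv huv => hAC u v huv hu.1 hv.2) (fun t ht => hω t ht.1) hXc hn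
  rw [abs_of_nonneg (by positivity), mul_assoc,
    ← rpow_neg_one_div_mul_rpow_one_div (by positivity) (by positivity) hc.le,
    mul_left_comm]
  exact mul_le_mul_of_nonneg_left hsum (by positivity)

theorem stmt_2 {Ω : Type*} [MeasurableSpace Ω] (P : Measure Ω) [IsProbabilityMeasure P]
    (X : ℕ → Ω → ℝ) (hmeas : ∀ t, Measurable (X t))
    (hid : ∀ t : ℕ, 1 ≤ t → IdentDistrib (X t) (X 1) P P)
    (hcont : Continuous (cdfOf P (X 1)))
    (p α : ℝ) (hp : 1 ≤ p) (hα : 1 < α) (hαp : α ≤ p)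
    (hmom : Integrable (fun ω => |X 1 ω| ^ (p / α)) P)
    (h0 h0star : ℝ → ℝ) (hmeas0 : Measurable h0star)
    (hAC : ∀ u v : ℝ, u ≤ v →
      lowerEnd (cdfOf P (X 1)) ≤ (u : EReal) → (v : EReal) ≤ upperEnd (cdfOf P (X 1)) →
      h0 v - h0 u = ∫ x in Set.Icc u v, h0star x)
    (hint : IntegrableOn (fun x => |h0star x| ^ (α / (α - 1)))
      {x : ℝ | lowerEnd (cdfOf P (X 1)) ≤ (x : EReal) ∧
        (x : EReal) ≤ upperEnd (cdfOf P (X 1))} volume) :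
    BoundedInProb P (fun n ω => (n : ℝ) ^ (-(1 / p)) *
      ∑ t ∈ Finset.Icc 2 n, |h0 (orderStat X n t ω) - h0 (orderStat X n (t - 1) ω)|) :=
  stmt_2_general P X hid p α hp hα hmom h0 h0star hmeas0 hAC hint
end

section
/- If (X_t)_{t∈ℤ} is a strictly stationary sequence of real random variables with common continuous marginal cdf F that is α-mixing, i.e., α_X(t) := sup{|P(A∩B) − P(A)P(B)| : A ∈ σ(X_u : u ≤ 0), B ∈ σ(X_v : v ≥ t)} → 0 as t → ∞, then X_t is temperately dependent: for every x ∈ (a_X, b_X), where a_X = sup{x : F(x)=0} and b_X = inf{x : F(x)=1}, one has P(min_{1≤t≤n} X_t ≥ x) → 0 and P(max_{1≤t≤n} X_t ≤ x) → 0 as n → ∞. -/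
open MeasureTheory ProbabilityTheory Filter

/-- The maximum of `X 1, …, X n`. -/
noncomputable def rmax {Ω : Type*} (X : ℕ → Ω → ℝ) (n : ℕ) (ω : Ω) : ℝ :=
  (Finset.Icc 1 (max n 1)).sup' (Finset.nonempty_Icc.mpr (le_max_right n 1)) fun t => X t ω

/-- The minimum of `X 1, …, X n`. -/
noncomputable def rmin {Ω : Type*} (X : ℕ → Ω → ℝ) (n : ℕ) (ω : Ω) : ℝ :=
  (Finset.Icc 1 (max n 1)).inf' (Finset.nonempty_Icc.mpr (le_max_right n 1)) fun t => X t ω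

/-- The σ-algebra `σ(X u : u ≤ 0)` generated by the past of the sequence. -/
def pastSigma {Ω : Type*} (X : ℤ → Ω → ℝ) : MeasurableSpace Ω :=
  ⨆ u : ℤ, ⨆ _ : u ≤ 0, MeasurableSpace.comap (X u) inferInstance

/-- The σ-algebra `σ(X v : v ≥ t)` generated by the future of the sequence from time `t`. -/
def futureSigma {Ω : Type*} (X : ℤ → Ω → ℝ) (t : ℤ) : MeasurableSpace Ω :=
  ⨆ v : ℤ, ⨆ _ : t ≤ v, MeasurableSpace.comap (X v) inferInstance

/-- The strong (α-) mixing coefficient of the sequence `X` at lag `t`. -/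
noncomputable def alphaMix {Ω : Type*} [MeasurableSpace Ω] (P : Measure Ω)
    (X : ℤ → Ω → ℝ) (t : ℤ) : ℝ :=
  sSup {r : ℝ | ∃ A B : Set Ω, MeasurableSet[pastSigma X] A ∧
    MeasurableSet[futureSigma X t] B ∧
    r = |(P (A ∩ B)).toReal - (P A).toReal * (P B).toReal|}

/-- Strict stationarity of the two-sided sequence `X`. -/
def StrictlyStationaryZ {Ω : Type*} [MeasurableSpace Ω] (P : Measure Ω)
    (X : ℤ → Ω → ℝ) : Prop :=
  ∀ (k : ℕ) (t : ℤ),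
    Measure.map (fun ω => fun i : Fin k => X (1 + t + (i : ℕ)) ω) P =
      Measure.map (fun ω => fun i : Fin k => X (1 + (i : ℕ)) ω) P

/-!
Fix `S = [x, ∞)` (for the minimum) or `S = (-∞, x]` (for the maximum), and let `u m` be the
probability that `X 1, …, X m` all lie in `S`. This is antitone, and `u 1 < 1` because `x` lies
strictly inside the support. A block of length `2n + k` contains a block of length `n` in the past
and one of length `n` at distance `k` in the future, so stationarity and mixing give
`u (2n + k) ≤ u n ^ 2 + α k`. Passing to the limit, `L = lim u` satisfies `L ≤ L ^ 2` with
`0 ≤ L < 1`, hence `L = 0`.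
-/

open scoped Topology

lemma tendsto_zero_of_le_sq_add {u α : ℕ → ℝ} (hu : Antitone u) (hu0 : ∀ n, 0 ≤ u n)
    {m : ℕ} (hm : u m < 1) (hle : ∀ n k, u (2 * n + k) ≤ u n ^ 2 + α k)
    (hα : Tendsto α atTop (𝓝 0)) : Tendsto u atTop (𝓝 0) := by
  have hbdd : BddBelow (Set.range u) := ⟨0, by rintro _ ⟨n, rfl⟩; exact hu0 n⟩
  have hlim : Tendsto u atTop (𝓝 (⨅ n, u n)) := tendsto_atTop_ciInf hu hbdd
  set L := ⨅ n, u n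
  have hL0 : 0 ≤ L := le_ciInf hu0
  have hL1 : L < 1 := (ciInf_le hbdd m).trans_lt hm
  have hLk (k : ℕ) : L ≤ L ^ 2 + α k :=
    ge_of_tendsto ((hlim.pow 2).add_const (α k))
      (Eventually.of_forall fun n => (ciInf_le hbdd _).trans (hle n k))
  have hLL : L ≤ L ^ 2 := by
    simpa using ge_of_tendsto (tendsto_const_nhds.add hα) (Eventually.of_forall hLk)
  have hL : L = 0 := by nlinarith
  rwa [hL] at hlim

section Blocks

variable {Ω : Type*}

def blockEvent (X : ℤ → Ω → ℝ) (S : Set ℝ) (a : ℤ) (m : ℕ) : Set Ω :=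
  {ω | ∀ i : Fin m, X (a + i) ω ∈ S}

variable {X : ℤ → Ω → ℝ}

lemma blockEvent_succ_subset (S : Set ℝ) (a : ℤ) (m : ℕ) :
    blockEvent X S a (m + 1) ⊆ blockEvent X S a m :=
  fun _ hω i => hω i.castSucc

-- The start is written as `1 + (a - 1)` to match the shifts in `StrictlyStationaryZ`.
lemma blockEvent_eq_preimage (S : Set ℝ) (a : ℤ) (m : ℕ) :
    blockEvent X S a m =
      (fun ω (i : Fin m) => X (1 + (a - 1) + (i : ℕ)) ω) ⁻¹' Set.univ.pi fun _ => S := by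
  ext ω
  simp [blockEvent]

lemma measurableSet_blockEvent {m : MeasurableSpace Ω} {S : Set ℝ} (hS : MeasurableSet S)
    {a : ℤ} {n : ℕ} (hX : ∀ i : Fin n, Measurable[m] (X (a + i))) :
    MeasurableSet[m] (blockEvent X S a n) := by
  simp only [blockEvent, Set.ofPred_forall]
  exact MeasurableSet.iInter fun i => hX i hS

lemma measurable_pastSigma {u : ℤ} (hu : u ≤ 0) : Measurable[pastSigma X] (X u) :=
  MeasurableSpace.comap_le_iff_le_map.mp <|
    le_iSup₂ (f := fun u (_ : u ≤ 0) => MeasurableSpace.comap (X u) inferInstance) u hu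

lemma measurable_futureSigma {t v : ℤ} (hv : t ≤ v) : Measurable[futureSigma X t] (X v) :=
  MeasurableSpace.comap_le_iff_le_map.mp <|
    le_iSup₂ (f := fun v (_ : t ≤ v) => MeasurableSpace.comap (X v) inferInstance) v hv

lemma setOf_forall_Icc_eq_blockEvent (S : Set ℝ) (m : ℕ) :
    {ω | ∀ t ∈ Finset.Icc 1 m, X (t : ℤ) ω ∈ S} = blockEvent X S 1 m := by
  ext ω
  simp only [Set.mem_ofPred_eq, Finset.mem_Icc, blockEvent]
  constructor
  · intro h i
    exact_mod_cast add_comm 1 (i : ℕ) ▸ h (i + 1) ⟨by omega, i.isLt⟩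
  · intro h t ht
    have := h ⟨t - 1, by omega⟩
    rwa [Fin.val_mk, Nat.cast_sub ht.1, Nat.cast_one, add_sub_cancel] at this

variable [MeasurableSpace Ω] {P : Measure Ω}

lemma StrictlyStationaryZ.measure_blockEvent (hss : StrictlyStationaryZ P X)
    (hmeas : ∀ t, Measurable (X t)) {S : Set ℝ} (hS : MeasurableSet S) (a : ℤ) (m : ℕ) :
    P (blockEvent X S a m) = P (blockEvent X S 1 m) := by
  have hmap (t : ℤ) : Measurable fun ω (i : Fin m) => X (1 + t + (i : ℕ)) ω :=
    measurable_pi_lambda _ fun _ => hmeas _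
  have hpi : MeasurableSet (Set.univ.pi fun _ : Fin m => S) := .univ_pi fun _ => hS
  rw [blockEvent_eq_preimage, blockEvent_eq_preimage, ← Measure.map_apply (hmap _) hpi,
    ← Measure.map_apply (hmap _) hpi, hss, hss]

lemma abs_measure_inter_sub_le_alphaMix [IsZeroOrProbabilityMeasure P] {A B : Set Ω} {t : ℤ}
    (hA : MeasurableSet[pastSigma X] A) (hB : MeasurableSet[futureSigma X t] B) :
    |(P (A ∩ B)).toReal - (P A).toReal * (P B).toReal| ≤ alphaMix P X t :=
  le_csSup ⟨1, by
    rintro _ ⟨A, B, -, -, rfl⟩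
    exact abs_sub_le_of_nonneg_of_le ENNReal.toReal_nonneg measureReal_le_one (by positivity)
      (mul_le_one₀ measureReal_le_one ENNReal.toReal_nonneg measureReal_le_one)⟩
    ⟨A, B, hA, hB, rfl⟩

lemma measure_blockEvent_le_sq_add_alphaMix [IsProbabilityMeasure P]
    (hss : StrictlyStationaryZ P X) (hmeas : ∀ t, Measurable (X t))
    {S : Set ℝ} (hS : MeasurableSet S) (n k : ℕ) :
    (P (blockEvent X S 1 (2 * n + k))).toReal ≤
      (P (blockEvent X S 1 n)).toReal ^ 2 + alphaMix P X k := by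
  set A := blockEvent X S (1 - n) n
  set B := blockEvent X S (k + 1) n
  have hsub : blockEvent X S (1 - n) (2 * n + k) ⊆ A ∩ B := fun ω hω =>
    ⟨fun i => hω ⟨i, by omega⟩, fun i => by
      convert hω ⟨n + k + i, by omega⟩ using 2
      push_cast
      ring⟩
  have hA : MeasurableSet[pastSigma X] A :=
    measurableSet_blockEvent hS fun i => measurable_pastSigma (by have := i.isLt; omega)
  have hB : MeasurableSet[futureSigma X k] B :=
    measurableSet_blockEvent hS fun i => measurable_futureSigma (by omega)
  calc (P (blockEvent X S 1 (2 * n + k))).toReal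
      = (P (blockEvent X S (1 - n) (2 * n + k))).toReal := by
        rw [hss.measure_blockEvent hmeas hS (1 - n)]
    _ ≤ (P (A ∩ B)).toReal := measureReal_mono hsub
    _ ≤ (P A).toReal * (P B).toReal + alphaMix P X k :=
        sub_le_iff_le_add'.mp ((le_abs_self _).trans (abs_measure_inter_sub_le_alphaMix hA hB))
    _ = (P (blockEvent X S 1 n)).toReal ^ 2 + alphaMix P X k := by
        rw [hss.measure_blockEvent hmeas hS (1 - n), hss.measure_blockEvent hmeas hS (k + 1), sq]

lemma tendsto_measure_blockEvent [IsProbabilityMeasure P]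
    (hss : StrictlyStationaryZ P X) (hmeas : ∀ t, Measurable (X t))
    (hmix : Tendsto (alphaMix P X) atTop (𝓝 0))
    {S : Set ℝ} (hS : MeasurableSet S) (h1 : P (X 1 ⁻¹' S) < 1) :
    Tendsto (fun m => P (blockEvent X S 1 m)) atTop (𝓝 0) := by
  have hu : Antitone fun m => (P (blockEvent X S 1 m)).toReal :=
    antitone_nat_of_succ_le fun m => measureReal_mono (blockEvent_succ_subset S 1 m)
  have hu1 : (P (blockEvent X S 1 1)).toReal < 1 := by
    have hX1 : blockEvent X S 1 1 = X 1 ⁻¹' S := by ext; simp [blockEvent]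
    rw [hX1, ← ENNReal.toReal_one]
    exact (ENNReal.toReal_lt_toReal (measure_ne_top _ _) ENNReal.one_ne_top).mpr h1
  refine (ENNReal.tendsto_toReal_iff (fun _ => measure_ne_top _ _) ENNReal.zero_ne_top).mp ?_
  simpa using tendsto_zero_of_le_sq_add hu (fun _ => ENNReal.toReal_nonneg) hu1
    (measure_blockEvent_le_sq_add_alphaMix hss hmeas hS)
    (hmix.comp tendsto_natCast_atTop_atTop)

end Blocks

lemma measure_preimage_Ici_lt_one_of_lowerEnd_lt {Ω : Type*} [MeasurableSpace Ω]
    {P : Measure Ω} [IsProbabilityMeasure P] {Y : Ω → ℝ} (hY : Measurable Y) {x : ℝ}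
    (hx : lowerEnd (cdfOf P Y) < x) : P (Y ⁻¹' Set.Ici x) < 1 := by
  obtain ⟨y, hay, hyx⟩ := EReal.lt_iff_exists_real_btwn.mp hx
  have hy : P {ω | Y ω ≤ y} ≠ 0 := fun h0 =>
    (le_sSup ⟨y, by simp [cdfOf, h0], rfl⟩ : (y : EReal) ≤ lowerEnd (cdfOf P Y)).not_gt hay
  have hpos : 0 < P (Y ⁻¹' Set.Iio x) :=
    (pos_iff_ne_zero.mpr hy).trans_le
      (measure_mono fun ω (h : Y ω ≤ y) => h.trans_lt (EReal.coe_lt_coe_iff.mp hyx))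
  rw [← Set.compl_Iio, Set.preimage_compl]
  simpa using prob_compl_lt_one_sub_of_lt_prob hpos (hY measurableSet_Iio)

lemma measure_preimage_Iic_lt_one_of_lt_upperEnd {Ω : Type*} [MeasurableSpace Ω]
    {P : Measure Ω} [IsProbabilityMeasure P] {Y : Ω → ℝ} {x : ℝ}
    (hx : x < upperEnd (cdfOf P Y)) : P (Y ⁻¹' Set.Iic x) < 1 := by
  refine prob_le_one.lt_of_ne fun h1 => ?_
  exact (sInf_le ⟨x, show (P (Y ⁻¹' Set.Iic x)).toReal = 1 by simp [h1], rfl⟩ :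
    upperEnd (cdfOf P Y) ≤ x).not_gt hx

theorem stmt_4_general {Ω : Type*} [MeasurableSpace Ω] (P : Measure Ω) [IsProbabilityMeasure P]
    (X : ℤ → Ω → ℝ) (hmeas : ∀ t, Measurable (X t))
    (hss : StrictlyStationaryZ P X)
    (hmix : Tendsto (fun t : ℤ => alphaMix P X t) atTop (nhds 0)) :
    ∀ x : ℝ, lowerEnd (cdfOf P (X 1)) < (x : EReal) →
      (x : EReal) < upperEnd (cdfOf P (X 1)) →
      Tendsto (fun n => P {ω | x ≤ rmin (fun t : ℕ => X (t : ℤ)) n ω}) atTop (nhds 0) ∧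
      Tendsto (fun n => P {ω | rmax (fun t : ℕ => X (t : ℤ)) n ω ≤ x}) atTop (nhds 0) := by
  intro x hlow hupp
  have hmax : Tendsto (fun n : ℕ => max n 1) atTop atTop :=
    tendsto_atTop_mono (le_max_left · 1) tendsto_id
  constructor
  · have h := (tendsto_measure_blockEvent hss hmeas hmix measurableSet_Ici
      (measure_preimage_Ici_lt_one_of_lowerEnd_lt (hmeas 1) hlow)).comp hmax
    simpa [Function.comp_def, ← setOf_forall_Icc_eq_blockEvent, rmin] using h
  · have h := (tendsto_measure_blockEvent hss hmeas hmix measurableSet_Iic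
      (measure_preimage_Iic_lt_one_of_lt_upperEnd hupp)).comp hmax
    simpa [Function.comp_def, ← setOf_forall_Icc_eq_blockEvent, rmax] using h

theorem stmt_4 {Ω : Type*} [MeasurableSpace Ω] (P : Measure Ω) [IsProbabilityMeasure P]
    (X : ℤ → Ω → ℝ) (hmeas : ∀ t, Measurable (X t))
    (hss : StrictlyStationaryZ P X)
    (hcont : Continuous (cdfOf P (X 1)))
    (hmix : Tendsto (fun t : ℤ => alphaMix P X t) atTop (nhds 0)) :
    ∀ x : ℝ, lowerEnd (cdfOf P (X 1)) < (x : EReal) →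
      (x : EReal) < upperEnd (cdfOf P (X 1)) →
      Tendsto (fun n => P {ω | x ≤ rmin (fun t : ℕ => X (t : ℤ)) n ω}) atTop (nhds 0) ∧
      Tendsto (fun n => P {ω | rmax (fun t : ℕ => X (t : ℤ)) n ω ≤ x}) atTop (nhds 0) :=
  stmt_4_general P X hmeas hss hmix
end

section
/- Let (X_t)_{t∈ℤ} be a strictly stationary sequence of real random variables with common marginal cdf F and strong mixing coefficients α_X(t). Then for every integer t ≥ 1, every n ≥ t, and every x ∈ ℝ with F(x) < 1, P(max_{1≤s≤n} X_s ≤ x) ≤ F(x)^{⌊n/t⌋} + α_X(t) · (1 − F(x)^{⌊n/t⌋}) / (1 − F(x)), where ⌊n/t⌋ denotes the integer part of n/t. -/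
open MeasureTheory ProbabilityTheory Filter

set_option linter.unusedSectionVars false
set_option maxHeartbeats 1000000

namespace Stmt5Aux

variable {Ω : Type*} [MeasurableSpace Ω] (P : Measure Ω) [IsProbabilityMeasure P]
  (X : ℤ → Ω → ℝ)

lemma toReal_le_one (A : Set Ω) : (P A).toReal ≤ 1 := by
  have h := prob_le_one (μ := P) (s := A)
  simpa using ENNReal.toReal_mono ENNReal.one_ne_top h

lemma bdd (t : ℤ) : BddAbove {r : ℝ | ∃ A B : Set Ω, MeasurableSet[pastSigma X] A ∧
    MeasurableSet[futureSigma X t] B ∧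
    r = |(P (A ∩ B)).toReal - (P A).toReal * (P B).toReal|} := by
  refine ⟨1, ?_⟩
  rintro r ⟨A, B, -, -, rfl⟩
  have h1 := toReal_le_one P (A ∩ B)
  have h2 := toReal_le_one P A
  have h3 := toReal_le_one P B
  have h4 : (0:ℝ) ≤ (P (A ∩ B)).toReal := ENNReal.toReal_nonneg
  have h5 : (0:ℝ) ≤ (P A).toReal := ENNReal.toReal_nonneg
  have h6 : (0:ℝ) ≤ (P B).toReal := ENNReal.toReal_nonneg
  rw [abs_le]
  constructor <;> nlinarith

lemma alphaMix_nonneg (t : ℤ) : 0 ≤ alphaMix P X t := by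
  apply le_csSup (bdd P X t)
  exact ⟨∅, ∅, @MeasurableSet.empty _ (pastSigma X), @MeasurableSet.empty _ (futureSigma X t),
    by simp⟩

lemma abs_le_alphaMix (t : ℤ) {A B : Set Ω} (hA : MeasurableSet[pastSigma X] A)
    (hB : MeasurableSet[futureSigma X t] B) :
    |(P (A ∩ B)).toReal - (P A).toReal * (P B).toReal| ≤ alphaMix P X t :=
  le_csSup (bdd P X t) ⟨A, B, hA, hB, rfl⟩

lemma past_meas {u : ℤ} (hu : u ≤ 0) (x : ℝ) :
    MeasurableSet[pastSigma X] {ω | X u ω ≤ x} := by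
  have h : MeasurableSpace.comap (X u) inferInstance ≤ pastSigma X := by
    refine le_trans ?_ (le_iSup _ u)
    exact le_iSup (fun _ : u ≤ 0 => MeasurableSpace.comap (X u) inferInstance) hu
  exact h _ ⟨Set.Iic x, measurableSet_Iic, rfl⟩

lemma future_meas {t v : ℤ} (hv : t ≤ v) (x : ℝ) :
    MeasurableSet[futureSigma X t] {ω | X v ω ≤ x} := by
  have h : MeasurableSpace.comap (X v) inferInstance ≤ futureSigma X t := by
    refine le_trans ?_ (le_iSup _ v)
    exact le_iSup (fun _ : t ≤ v => MeasurableSpace.comap (X v) inferInstance) hv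
  exact h _ ⟨Set.Iic x, measurableSet_Iic, rfl⟩

/-- The event that `X (j*t + c) ≤ x` for all `j = 1, …, m`. -/
def Ev (t : ℕ) (x : ℝ) (m : ℕ) (c : ℤ) : Set Ω :=
  ⋂ j ∈ Finset.Icc 1 m, {ω | X ((j : ℤ) * t + c) ω ≤ x}

lemma ev_shift (hmeas : ∀ s, Measurable (X s)) (hss : StrictlyStationaryZ P X)
    {t : ℕ} (ht : 1 ≤ t) (x : ℝ) (m : ℕ) (c d : ℤ) :
    P (Ev X t x m c) = P (Ev X t x m d) := by
  set S : Set (Fin (m * t) → ℝ) :=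
    {f | ∀ j ∈ Finset.Icc 1 m, ∀ h : j * t - 1 < m * t, f ⟨j * t - 1, h⟩ ≤ x} with hS
  have hSmeas : MeasurableSet S := by
    have hrw : S = ⋂ j ∈ Finset.Icc 1 m, ⋂ h : j * t - 1 < m * t,
        (fun f : Fin (m*t) → ℝ => f ⟨j*t-1, h⟩) ⁻¹' Set.Iic x := by
      ext f; simp [hS]
    rw [hrw]
    refine MeasurableSet.biInter (Finset.Icc 1 m).countable_toSet fun j _ => ?_
    exact MeasurableSet.iInter fun h => (measurable_pi_apply _) measurableSet_Iic
  have key : ∀ e : ℤ, Ev X t x m e = (fun ω (i : Fin (m*t)) => X (1 + e + (i:ℕ)) ω) ⁻¹' S := by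
    intro e
    ext ω
    simp only [Ev, Set.mem_iInter, Set.mem_preimage, hS, Set.mem_setOf_eq, Finset.mem_Icc]
    have harith : ∀ j : ℕ, 1 ≤ j → j ≤ m →
        ((1 : ℤ) + e + ((j * t - 1 : ℕ) : ℤ) = (j:ℤ) * t + e ∧ j * t - 1 < m * t) := by
      intro j hj1 hjm
      have h1 : 1 ≤ j * t := Nat.one_le_iff_ne_zero.mpr (by positivity)
      have h2 : j * t ≤ m * t := Nat.mul_le_mul_right t hjm
      constructor
      · push_cast [h1]; ring
      · omega
    constructor
    · intro H j hj h
      obtain ⟨heq, -⟩ := harith j hj.1 hj.2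
      simpa [heq] using H j hj
    · intro H j hj
      obtain ⟨heq, hlt⟩ := harith j hj.1 hj.2
      have := H j hj hlt
      simpa [heq] using this
  have hmb : ∀ e : ℤ, Measurable (fun ω (i : Fin (m*t)) => X (1 + e + (i:ℕ)) ω) :=
    fun e => measurable_pi_lambda _ fun i => hmeas _
  have happ : ∀ e : ℤ, P (Ev X t x m e) =
      Measure.map (fun ω (i : Fin (m*t)) => X (1 + e + (i:ℕ)) ω) P S := by
    intro e
    rw [key e, Measure.map_apply (hmb e) hSmeas]
  rw [happ c, happ d, hss (m*t) c, hss (m*t) d]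

end Stmt5Aux

theorem stmt_5 {Ω : Type*} [MeasurableSpace Ω] (P : Measure Ω) [IsProbabilityMeasure P]
    (X : ℤ → Ω → ℝ) (hmeas : ∀ t, Measurable (X t))
    (hss : StrictlyStationaryZ P X) :
    ∀ t : ℕ, 1 ≤ t → ∀ n : ℕ, t ≤ n → ∀ x : ℝ, cdfOf P (X 1) x < 1 →
      (P {ω | rmax (fun s : ℕ => X (s : ℤ)) n ω ≤ x}).toReal ≤
        cdfOf P (X 1) x ^ (n / t) +
          alphaMix P X (t : ℤ) * (1 - cdfOf P (X 1) x ^ (n / t)) / (1 - cdfOf P (X 1) x) := by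
  intro t ht n hn x hx
  set F := cdfOf P (X 1) x with hFdef
  set k := n / t with hkdef
  set α := alphaMix P X (t : ℤ) with hαdef
  have hk1 : 1 ≤ k := (Nat.one_le_div_iff ht).mpr hn
  have hF0 : 0 ≤ F := ENNReal.toReal_nonneg
  have hα0 : 0 ≤ α := Stmt5Aux.alphaMix_nonneg P X t
  -- the single-event probability equals F, for any shift
  have hFeq : ∀ c : ℤ, (P (Stmt5Aux.Ev X t x 1 c)).toReal = F := by
    intro c
    have h1 : Stmt5Aux.Ev X t x 1 (1 - t) = {ω | X 1 ω ≤ x} := by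
      simp only [Stmt5Aux.Ev, Finset.Icc_self, Finset.mem_singleton, Set.iInter_iInter_eq_left]
      norm_num
    rw [Stmt5Aux.ev_shift P X hmeas hss ht x 1 c (1 - t), h1]
    rfl
  -- the key mixing step
  have step : ∀ m, 1 ≤ m → (P (Stmt5Aux.Ev X t x (m+1) 0)).toReal ≤
      F * (P (Stmt5Aux.Ev X t x m 0)).toReal + α := by
    intro m hm
    set c : ℤ := -(m : ℤ) * t with hcdef
    have hsplit : Stmt5Aux.Ev X t x (m+1) c =
        Stmt5Aux.Ev X t x m c ∩ {ω | X t ω ≤ x} := by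
      have hins : Finset.Icc 1 (m+1) = insert (m+1) (Finset.Icc 1 m) := by
        ext a; simp only [Finset.mem_Icc, Finset.mem_insert]; omega
      have hidx : ((m+1 : ℕ) : ℤ) * t + c = (t : ℤ) := by
        rw [hcdef]; push_cast; ring
      simp only [Stmt5Aux.Ev, hins, Finset.set_biInter_insert, hidx]
      exact Set.inter_comm _ _
    have hA : MeasurableSet[pastSigma X] (Stmt5Aux.Ev X t x m c) := by
      refine MeasurableSet.biInter (Finset.Icc 1 m).countable_toSet fun j hj => ?_
      refine Stmt5Aux.past_meas X ?_ x
      rw [hcdef]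
      have hj2 : (j : ℤ) ≤ m := by exact_mod_cast (Finset.mem_Icc.mp hj).2
      have ht0 : (0 : ℤ) ≤ t := by positivity
      nlinarith
    have hB : MeasurableSet[futureSigma X (t : ℤ)] {ω | X t ω ≤ x} :=
      Stmt5Aux.future_meas X le_rfl x
    have hmix := Stmt5Aux.abs_le_alphaMix P X (t : ℤ) hA hB
    rw [abs_le] at hmix
    have hPB : (P {ω | X (t : ℤ) ω ≤ x}).toReal = F := by
      have : Stmt5Aux.Ev X t x 1 0 = {ω | X (t : ℤ) ω ≤ x} := by
        simp only [Stmt5Aux.Ev, Finset.Icc_self, Finset.mem_singleton,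
          Set.iInter_iInter_eq_left]
        norm_num
      rw [← this, hFeq 0]
    have hPA : (P (Stmt5Aux.Ev X t x m c)).toReal = (P (Stmt5Aux.Ev X t x m 0)).toReal := by
      rw [Stmt5Aux.ev_shift P X hmeas hss ht x m c 0]
    have hshift : (P (Stmt5Aux.Ev X t x (m+1) 0)).toReal
        = (P (Stmt5Aux.Ev X t x (m+1) c)).toReal := by
      rw [Stmt5Aux.ev_shift P X hmeas hss ht x (m+1) 0 c]
    rw [hshift, hsplit]
    have := hmix.2
    rw [hPB, hPA] at this
    linarith [this]
  -- induction bound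
  have ind : ∀ m, 1 ≤ m → (P (Stmt5Aux.Ev X t x m 0)).toReal ≤
      F ^ m + α * ∑ i ∈ Finset.range m, F ^ i := by
    intro m hm
    induction m, hm using Nat.le_induction with
    | base =>
      rw [hFeq 0]
      simp only [pow_one, Finset.range_one, Finset.sum_singleton, pow_zero, mul_one]
      linarith
    | succ m hm IH =>
      calc (P (Stmt5Aux.Ev X t x (m+1) 0)).toReal
          ≤ F * (P (Stmt5Aux.Ev X t x m 0)).toReal + α := step m hm
        _ ≤ F * (F ^ m + α * ∑ i ∈ Finset.range m, F ^ i) + α := by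
            have := mul_le_mul_of_nonneg_left IH hF0
            linarith
        _ = F ^ (m+1) + α * ∑ i ∈ Finset.range (m+1), F ^ i := by
            rw [geom_sum_succ]; ring
  -- inclusion of the max event
  have hsub : {ω | rmax (fun s : ℕ => X (s : ℤ)) n ω ≤ x} ⊆ Stmt5Aux.Ev X t x k 0 := by
    intro ω hω
    simp only [Set.mem_setOf_eq, rmax, Finset.sup'_le_iff] at hω
    simp only [Stmt5Aux.Ev, Set.mem_iInter, Set.mem_setOf_eq]
    intro j hj
    obtain ⟨hj1, hjk⟩ := Finset.mem_Icc.mp hj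
    have h1 : 1 ≤ j * t := Nat.one_le_iff_ne_zero.mpr (by positivity)
    have h2 : j * t ≤ n := le_trans (Nat.mul_le_mul_right t hjk) (Nat.div_mul_le_self n t)
    have := hω (j * t) (Finset.mem_Icc.mpr ⟨h1, le_trans h2 (le_max_left n 1)⟩)
    have hcast : ((j * t : ℕ) : ℤ) = (j : ℤ) * t + 0 := by push_cast; ring
    rwa [hcast] at this
  have hle : (P {ω | rmax (fun s : ℕ => X (s : ℤ)) n ω ≤ x}).toReal ≤
      (P (Stmt5Aux.Ev X t x k 0)).toReal :=
    ENNReal.toReal_mono (measure_ne_top P _) (measure_mono hsub)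
  have hgeom : ∑ i ∈ Finset.range k, F ^ i = (1 - F ^ k) / (1 - F) := by
    rw [geom_sum_eq hx.ne k]
    rw [← neg_div_neg_eq]
    ring_nf
  calc (P {ω | rmax (fun s : ℕ => X (s : ℤ)) n ω ≤ x}).toReal
      ≤ F ^ k + α * ∑ i ∈ Finset.range k, F ^ i := le_trans hle (ind k hk1)
    _ = F ^ k + α * (1 - F ^ k) / (1 - F) := by rw [hgeom, mul_div_assoc]
end

section
/- Let (X_t)_{t≥1} be a strictly stationary, temperately dependent sequence of real random variables that satisfies the Glivenko–Cantelli property and has finite p-th moments E(|X_1|^p) < ∞ for some p > 2. Assume the common marginal cdf F and its quantile function F^{-1} are both continuous, and let a_X = sup{x : F(x)=0}, b_X = inf{x : F(x)=1}. Let h_0 be absolutely continuous on [a_X, b_X] with Radon–Nikodym derivative h_0* that is continuous on a finite interval [a, b] ⊆ [a_X, b_X] and vanishes outside [a, b]. Then Σ_{t=2}^n |h_0(X_{t:n}) − h_0(X_{t-1:n})| converges in probability, as n → ∞, to ∫_a^b |h_0*(x)| dx, where X_{1:n} < ⋯ < X_{n:n} denote the order statistics of X_1, …, X_n. -/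
open MeasureTheory ProbabilityTheory Filter
open scoped Classical

/-- Strict stationarity of the sequence `X 1, X 2, …`. -/
def StrictlyStationary {Ω : Type*} [MeasurableSpace Ω] (P : Measure Ω)
    (X : ℕ → Ω → ℝ) : Prop :=
  ∀ (k t : ℕ),
    Measure.map (fun ω => fun i : Fin k => X (1 + t + (i : ℕ)) ω) P =
      Measure.map (fun ω => fun i : Fin k => X (1 + (i : ℕ)) ω) P

/-- Temperate dependence with respect to the cdf `F`. -/
def TemperatelyDependent {Ω : Type*} [MeasurableSpace Ω] (P : Measure Ω)
    (X : ℕ → Ω → ℝ) (F : ℝ → ℝ) : Prop :=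
  ∀ x : ℝ, lowerEnd F < (x : EReal) → (x : EReal) < upperEnd F →
    Tendsto (fun n => P {ω | x ≤ rmin X n ω}) atTop (nhds 0) ∧
    Tendsto (fun n => P {ω | rmax X n ω ≤ x}) atTop (nhds 0)

/-- The empirical cdf of the sample `X 1, …, X n`. -/
noncomputable def empCDF {Ω : Type*} (X : ℕ → Ω → ℝ) (n : ℕ) (ω : Ω) (x : ℝ) : ℝ :=
  (n : ℝ)⁻¹ * ∑ t ∈ Finset.Icc 1 n, if X t ω ≤ x then (1 : ℝ) else 0

/-- The (weak) Glivenko–Cantelli property: `sup_x |F_n x - F x| → 0` in probability. -/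
def GlivenkoCantelliProp {Ω : Type*} [MeasurableSpace Ω] (P : Measure Ω)
    (X : ℕ → Ω → ℝ) (F : ℝ → ℝ) : Prop :=
  ∀ ε : ℝ, 0 < ε →
    Tendsto (fun n => P {ω | ε ≤ ⨆ x : ℝ, |empCDF X n ω x - F x|}) atTop (nhds 0)

/-- The quantile function `F⁻¹ t = inf {x : F x ≥ t}`. -/
noncomputable def quantile (F : ℝ → ℝ) (t : ℝ) : ℝ := sInf {x | t ≤ F x}

/-- Convergence in probability of `Z n` to the constant `c`. -/
def TendstoInProb {Ω : Type*} [MeasurableSpace Ω] (P : Measure Ω)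
    (Z : ℕ → Ω → ℝ) (c : ℝ) : Prop :=
  ∀ ε : ℝ, 0 < ε → Tendsto (fun n => P {ω | ε ≤ |Z n ω - c|}) atTop (nhds 0)

/-!
Almost surely every observation lies in `[a_X, b_X]`, where `h₀` is absolutely continuous, so each
term of the sum is `|∫ h₀*|` over the gap between consecutive order statistics and the sum is at
most `∫_a^b |h₀*|`.

For the reverse inequality, split `[a, b]` into `2K + 1` cells of equal width and keep every other
cell as a window. A continuous quantile function makes `F` strictly increasing on `[a_X, b_X]`, so
every window has positive `F`-mass and contains an observation as soon as `sup |F_n - F|` is small.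
One observation per window gives a subsequence of the order statistics whose gaps are short, so by
uniform continuity of `h₀*` the `|∫ h₀*|` over these gaps add up to almost `∫_a^b |h₀*|`, and by the
triangle inequality the full sum dominates the sum along the subsequence. The Glivenko–Cantelli
property turns these two bounds into convergence in probability.
-/

open Set Topology Interval

theorem abs_sub_le_sum_Ico_abs_sub (f : ℕ → ℝ) {m n : ℕ} (h : m ≤ n) :
    |f n - f m| ≤ ∑ j ∈ Finset.Ico m n, |f (j + 1) - f j| := by
  rw [← Finset.sum_Ico_sub f h]
  exact Finset.abs_sum_le_sum_abs _ _

theorem sum_abs_sub_comp_le_sum_Ico (f : ℕ → ℝ) {k : ℕ → ℕ} :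
    ∀ {K : ℕ}, MonotoneOn k (Iic K) →
      ∑ i ∈ Finset.range K, |f (k (i + 1)) - f (k i)| ≤
        ∑ j ∈ Finset.Ico (k 0) (k K), |f (j + 1) - f j|
  | 0, _ => by simp
  | K + 1, hk => by
    have hkK : MonotoneOn k (Iic K) := hk.mono (Iic_subset_Iic.2 K.le_succ)
    have h0K : k 0 ≤ k K := hkK (by simp) (by simp) K.zero_le
    have hKK : k K ≤ k (K + 1) := hk (by simp) (by simp) K.le_succ
    rw [Finset.sum_range_succ, ← Finset.sum_Ico_consecutive _ h0K hKK]
    exact add_le_add (sum_abs_sub_comp_le_sum_Ico f hkK) (abs_sub_le_sum_Ico_abs_sub f hKK)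

theorem integral_abs_le_abs_integral_add {g : ℝ → ℝ} {u v ε : ℝ} (huv : u ≤ v)
    (hg : IntervalIntegrable g volume u v) (hosc : ∀ x ∈ Icc u v, |g x - g u| ≤ ε) :
    ∫ x in u..v, |g x| ≤ |∫ x in u..v, g x| + 2 * ε * (v - u) := by
  have habs : ∫ x in u..v, |g x| ≤ (|g u| + ε) * (v - u) := by
    calc ∫ x in u..v, |g x| ≤ ∫ _ in u..v, (|g u| + ε) :=
          intervalIntegral.integral_mono_on huv hg.abs intervalIntegrable_const fun x hx => by
            linarith [abs_sub_abs_le_abs_sub (g x) (g u), hosc x hx]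
      _ = (|g u| + ε) * (v - u) := by simp; ring
  have hdev : |∫ x in u..v, (g x - g u)| ≤ ε * (v - u) := by
    have := intervalIntegral.norm_integral_le_of_norm_le_const (a := u) (b := v)
      (f := fun x => g x - g u) (C := ε) fun x hx => by
        rw [uIoc_of_le huv] at hx
        exact hosc x (Ioc_subset_Icc_self hx)
    rwa [abs_of_nonneg (sub_nonneg.2 huv)] at this
  rw [intervalIntegral.integral_sub hg intervalIntegrable_const,
    intervalIntegral.integral_const, smul_eq_mul] at hdev
  have hconst : |g u| * (v - u) = |(v - u) * g u| := by
    rw [abs_mul, abs_of_nonneg (sub_nonneg.2 huv), mul_comm]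
  have := abs_sub_abs_le_abs_sub ((v - u) * g u) (∫ x in u..v, g x)
  rw [abs_sub_comm] at this
  nlinarith

noncomputable def windowWidth (a b : ℝ) (K : ℕ) : ℝ := (b - a) / (2 * K + 1)

/-- Cell `2i` of the partition of `[a, b]` into `2K + 1` cells of equal width. -/
def window (a b : ℝ) (K i : ℕ) : Set ℝ :=
  Icc (a + 2 * i * windowWidth a b K) (a + (2 * i + 1) * windowWidth a b K)

section Window

variable {a b : ℝ} {K i j : ℕ} {x y : ℝ}

theorem windowWidth_pos (hab : a < b) : 0 < windowWidth a b K := by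
  unfold windowWidth; positivity

theorem mul_windowWidth (K : ℕ) : (2 * K + 1) * windowWidth a b K = b - a := by
  unfold windowWidth; field_simp

theorem tendsto_windowWidth : Tendsto (windowWidth a b) atTop (𝓝 0) :=
  tendsto_const_nhds.div_atTop <| tendsto_atTop_add_const_right _ 1 <|
    Tendsto.const_mul_atTop two_pos tendsto_natCast_atTop_atTop

theorem window_subset_Icc (hab : a ≤ b) (hi : i ≤ K) : window a b K i ⊆ Icc a b := by
  have hw : 0 ≤ windowWidth a b K := div_nonneg (sub_nonneg.2 hab) (by positivity)
  have hiK : (i : ℝ) ≤ K := by exact_mod_cast hi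
  have := mul_windowWidth (a := a) (b := b) K
  rintro x ⟨hx₁, hx₂⟩
  constructor <;> nlinarith

theorem lt_of_mem_window (hab : a < b) (hij : i < j) (hx : x ∈ window a b K i)
    (hy : y ∈ window a b K j) : x < y := by
  have hw := windowWidth_pos (K := K) hab
  have hij' : (i : ℝ) + 1 ≤ j := by exact_mod_cast hij
  nlinarith [hx.2, hy.1]

theorem sub_le_of_mem_window_succ (hx : x ∈ window a b K i) (hy : y ∈ window a b K (i + 1)) :
    y - x ≤ 3 * windowWidth a b K := by
  have := hx.1; have := hy.2; push_cast at *; linarith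

theorem sub_le_of_mem_window_zero (hx : x ∈ window a b K 0) : x - a ≤ windowWidth a b K := by
  have := hx.2; simp at this; linarith

theorem sub_le_of_mem_window_last (hx : x ∈ window a b K K) : b - x ≤ windowWidth a b K := by
  have := hx.1; have := mul_windowWidth (a := a) (b := b) K; linarith

end Window

theorem integral_abs_le_sum_abs_integral_add {g : ℝ → ℝ} {a b M ε : ℝ} {w : ℕ → ℝ} {K : ℕ}
    (hg : ContinuousOn g (Icc a b)) (hM : ∀ x ∈ Icc a b, |g x| ≤ M)
    (hw : MonotoneOn w (Iic K)) (ha : a ≤ w 0) (hb : w K ≤ b)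
    (hosc : ∀ i < K, ∀ x ∈ Icc (w i) (w (i + 1)), |g x - g (w i)| ≤ ε) :
    ∫ x in a..b, |g x| ≤ ∑ i ∈ Finset.range K, |∫ x in w i..w (i + 1), g x| +
      2 * ε * (w K - w 0) + M * (w 0 - a + (b - w K)) := by
  have hmem : ∀ i ≤ K, w i ∈ Icc a b := fun i hi =>
    ⟨ha.trans (hw (by simp) (by simpa using hi) i.zero_le),
      (hw (by simpa using hi) (by simp) hi).trans hb⟩
  have hint : ∀ u ∈ Icc a b, ∀ v ∈ Icc a b, IntervalIntegrable g volume u v := fun u hu v hv =>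
    (hg.mono (uIcc_subset_Icc hu hv)).intervalIntegrable
  have hint_abs : ∀ u ∈ Icc a b, ∀ v ∈ Icc a b, IntervalIntegrable (|g ·|) volume u v :=
    fun u hu v hv => (hint u hu v hv).abs
  have hedge : ∀ u ∈ Icc a b, ∀ v ∈ Icc a b, u ≤ v → ∫ x in u..v, |g x| ≤ M * (v - u) :=
    fun u hu v hv huv => by
      have := intervalIntegral.norm_integral_le_of_norm_le_const (a := u) (b := v)
        (f := fun x => |g x|) (C := M) fun x hx => by
          rw [uIoc_of_le huv] at hx
          simpa using hM x ⟨hu.1.trans hx.1.le, hx.2.trans hv.2⟩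
      rw [abs_of_nonneg (sub_nonneg.2 huv)] at this
      exact (le_abs_self _).trans this
  have hmid : ∑ i ∈ Finset.range K, ∫ x in w i..w (i + 1), |g x| ≤
      ∑ i ∈ Finset.range K, |∫ x in w i..w (i + 1), g x| + 2 * ε * (w K - w 0) := by
    rw [← Finset.sum_range_sub w, Finset.mul_sum, ← Finset.sum_add_distrib]
    refine Finset.sum_le_sum fun i hi => ?_
    have hi : i < K := Finset.mem_range.1 hi
    exact integral_abs_le_abs_integral_add (hw (by simpa using hi.le) (by simpa using hi) i.le_succ)
      (hint _ (hmem i hi.le) _ (hmem (i + 1) hi)) (hosc i hi)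
  have hsplit : ∫ x in a..b, |g x| = (∫ x in a..w 0, |g x|) +
      ∑ i ∈ Finset.range K, (∫ x in w i..w (i + 1), |g x|) + ∫ x in w K..b, |g x| := by
    have hab : a ≤ b := ha.trans ((hmem 0 K.zero_le).2)
    rw [intervalIntegral.sum_integral_adjacent_intervals (a := w) (n := K) fun i hi =>
        hint_abs _ (hmem i (by omega)) _ (hmem (i + 1) (by omega)),
      intervalIntegral.integral_add_adjacent_intervals
        (hint_abs _ ⟨le_rfl, hab⟩ _ (hmem 0 K.zero_le))
        (hint_abs _ (hmem 0 K.zero_le) _ (hmem K le_rfl)),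
      intervalIntegral.integral_add_adjacent_intervals
        (hint_abs _ ⟨le_rfl, hab⟩ _ (hmem K le_rfl)) (hint_abs _ (hmem K le_rfl) _ ⟨hab, le_rfl⟩)]
  have h0 := hedge a ⟨le_rfl, (ha.trans (hmem 0 K.zero_le).2)⟩ _ (hmem 0 K.zero_le) ha
  have hK := hedge _ (hmem K le_rfl) b ⟨(hmem K le_rfl).1.trans hb, le_rfl⟩ hb
  linarith [mul_add M (w 0 - a) (b - w K)]

theorem exists_forall_mem_window_integral_abs_le {g : ℝ → ℝ} {a b ε : ℝ} (hab : a < b)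
    (hg : ContinuousOn g (Icc a b)) (hε : 0 < ε) :
    ∃ K : ℕ, ∀ w : ℕ → ℝ, (∀ i ≤ K, w i ∈ window a b K i) →
      (∫ x in a..b, |g x|) - ε ≤ ∑ i ∈ Finset.range K, |∫ x in w i..w (i + 1), g x| := by
  obtain ⟨M, hM⟩ := isCompact_Icc.exists_bound_of_continuousOn hg
  have hM0 : 0 ≤ M := (norm_nonneg _).trans (hM a ⟨le_rfl, hab.le⟩)
  set ε₁ := ε / (4 * (b - a)) with hε₁
  obtain ⟨δ, hδ, hunif⟩ := Metric.uniformContinuousOn_iff_le.1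
    (isCompact_Icc.uniformContinuousOn_of_continuous hg) ε₁ (by positivity)
  have hMw : Tendsto (fun K => M * windowWidth a b K) atTop (𝓝 0) := by
    simpa using tendsto_windowWidth.const_mul M
  obtain ⟨K, hKδ, hKM⟩ := (((tendsto_windowWidth (a := a) (b := b)).eventually
    (gt_mem_nhds (by positivity : (0 : ℝ) < δ / 3))).and
    (hMw.eventually (gt_mem_nhds (by positivity : 0 < ε / 4)))).exists
  refine ⟨K, fun w hw => ?_⟩
  have hwab : ∀ i ≤ K, w i ∈ Icc a b := fun i hi => window_subset_Icc hab.le hi (hw i hi)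
  have hosc : ∀ i < K, ∀ x ∈ Icc (w i) (w (i + 1)), |g x - g (w i)| ≤ ε₁ := fun i hi x hx => by
    have hgap := sub_le_of_mem_window_succ (hw i hi.le) (hw (i + 1) hi)
    have hdist : dist x (w i) ≤ δ := by
      rw [Real.dist_eq, abs_of_nonneg (sub_nonneg.2 hx.1)]
      linarith [hx.2]
    simpa [Real.dist_eq] using hunif x ⟨(hwab i hi.le).1.trans hx.1, hx.2.trans (hwab (i + 1) hi).2⟩
      (w i) (hwab i hi.le) hdist
  have key := integral_abs_le_sum_abs_integral_add hg (fun x hx => by simpa using hM x hx)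
    (StrictMonoOn.monotoneOn fun i hi j hj hij => lt_of_mem_window hab hij (hw i hi) (hw j hj))
    (hwab 0 K.zero_le).1 (hwab K le_rfl).2 hosc
  have hwK : w K - w 0 ≤ b - a := by linarith [(hwab 0 K.zero_le).1, (hwab K le_rfl).2]
  have hedge : M * (w 0 - a + (b - w K)) ≤ 2 * (M * windowWidth a b K) := by
    have := sub_le_of_mem_window_zero (hw 0 K.zero_le)
    have := sub_le_of_mem_window_last (hw K le_rfl)
    nlinarith
  have hmid : 2 * ε₁ * (w K - w 0) ≤ ε / 2 := by
    calc 2 * ε₁ * (w K - w 0) ≤ 2 * ε₁ * (b - a) := by gcongr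
      _ = ε / 2 := by rw [hε₁]; field_simp [(sub_pos.2 hab).ne']; ring
  linarith

theorem cdfOf_eq_cdf_map {Ω : Type*} [MeasurableSpace Ω] {P : Measure Ω} [IsProbabilityMeasure P]
    {Y : Ω → ℝ} (hY : Measurable Y) : cdfOf P Y = cdf (P.map Y) := by
  have := Measure.isProbabilityMeasure_map (μ := P) hY.aemeasurable
  funext x
  rw [cdf_eq_real, measureReal_def, Measure.map_apply hY measurableSet_Iic]
  rfl

theorem cdf_lt_cdf_of_continuousOn_quantile (μ : Measure ℝ)
    (hq : ContinuousOn (quantile (cdf μ)) (Ioo 0 1)) {c d : ℝ} (hcd : c < d)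
    (hc : lowerEnd (cdf μ) ≤ c) (hd : d ≤ upperEnd (cdf μ)) :
    cdf μ c < cdf μ d := by
  -- A flat piece of the cdf at a level `v ∈ (0, 1)` is a jump of the quantile function at `v`.
  refine ((cdf μ).mono hcd.le).lt_of_ne fun hflat => ?_
  set v := cdf μ c
  have hv0 : 0 < v := by
    by_contra! hv
    have hd0 : (d : EReal) ≤ lowerEnd (cdf μ) :=
      le_sSup ⟨d, le_antisymm (hflat ▸ hv) (cdf_nonneg μ d), rfl⟩
    exact hcd.not_ge (by exact_mod_cast hd0.trans hc)
  have hv1 : v < 1 := by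
    by_contra! hv
    have hc1 : upperEnd (cdf μ) ≤ c := sInf_le ⟨c, le_antisymm (cdf_le_one μ c) hv, rfl⟩
    exact hcd.not_ge (by exact_mod_cast hd.trans hc1)
  have hqv : quantile (cdf μ) v ≤ c := by
    obtain ⟨x₀, hx₀⟩ := ((tendsto_cdf_atBot μ).eventually (gt_mem_nhds hv0)).exists
    refine csInf_le ⟨x₀, fun y hy => ?_⟩ (show v ≤ cdf μ c from le_rfl)
    by_contra! hyx
    exact (lt_of_le_of_lt ((cdf μ).mono hyx.le) hx₀).not_ge hy
  have hjump : ∀ t ∈ Ioo v 1, d ≤ quantile (cdf μ) t := fun t ht => by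
    obtain ⟨x₁, hx₁⟩ := ((tendsto_cdf_atTop μ).eventually (lt_mem_nhds ht.2)).exists
    refine le_csInf ⟨x₁, hx₁.le⟩ fun y hy => ?_
    by_contra! hyd
    have : cdf μ y ≤ cdf μ d := (cdf μ).mono hyd.le
    exact (hy.trans this).not_gt (hflat ▸ ht.1)
  have hlim : Tendsto (quantile (cdf μ)) (𝓝[>] v) (𝓝 (quantile (cdf μ) v)) :=
    ((hq.continuousAt (Ioo_mem_nhds hv0 hv1)).tendsto).mono_left nhdsWithin_le_nhds
  have := ge_of_tendsto hlim (mem_of_superset (Ioo_mem_nhdsGT hv1) hjump)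
  linarith

theorem ae_lowerEnd_le_and_le_upperEnd (μ : Measure ℝ) [IsProbabilityMeasure μ] :
    ∀ᵐ (x : ℝ) ∂μ, lowerEnd (cdf μ) ≤ x ∧ (x : EReal) ≤ upperEnd (cdf μ) := by
  have hlow : ∀ᵐ x ∂μ, ∀ q : ℚ, cdf μ q = 0 → (q : ℝ) < x := ae_all_iff.2 fun q => by
    rcases eq_or_ne (cdf μ q) 0 with hq | hq
    · refine ae_iff.2 ?_
      simp only [hq, true_imp_iff, not_lt]
      change μ (Iic (q : ℝ)) = 0
      rw [← ofReal_cdf, hq, ENNReal.ofReal_zero]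
    · exact Eventually.of_forall fun _ h => absurd h hq
  have hup : ∀ᵐ x ∂μ, ∀ q : ℚ, cdf μ q = 1 → x ≤ (q : ℝ) := ae_all_iff.2 fun q => by
    rcases eq_or_ne (cdf μ q) 1 with hq | hq
    · refine ae_iff.2 ?_
      simp only [hq, true_imp_iff, not_le]
      change μ (Ioi (q : ℝ)) = 0
      rw [← compl_Iic, prob_compl_eq_zero_iff measurableSet_Iic, ← ofReal_cdf, hq,
        ENNReal.ofReal_one]
    · exact Eventually.of_forall fun _ h => absurd h hq
  filter_upwards [hlow, hup] with x hlo hhi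
  constructor
  · refine sSup_le ?_
    rintro _ ⟨y, hy, rfl⟩
    by_contra! hxy
    obtain ⟨q, hxq, hqy⟩ := exists_rat_btwn (EReal.coe_lt_coe_iff.1 hxy)
    exact (hlo q (le_antisymm (hy ▸ (cdf μ).mono hqy.le) (cdf_nonneg μ q))).not_gt hxq
  · refine le_sInf ?_
    rintro _ ⟨y, hy, rfl⟩
    by_contra! hxy
    obtain ⟨q, hyq, hqx⟩ := exists_rat_btwn (EReal.coe_lt_coe_iff.1 hxy)
    exact (hhi q (le_antisymm (cdf_le_one μ q) (hy ▸ (cdf μ).mono hyq.le))).not_gt hqx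

theorem StrictlyStationary.map_eq {Ω : Type*} [MeasurableSpace Ω] {P : Measure Ω}
    {X : ℕ → Ω → ℝ} (hss : StrictlyStationary P X) (hX : ∀ t, Measurable (X t)) (t : ℕ) :
    P.map (X (1 + t)) = P.map (X 1) := by
  have h := congrArg (Measure.map fun f : Fin 1 → ℝ => f 0) (hss 1 t)
  rwa [Measure.map_map (measurable_pi_apply 0) (measurable_pi_lambda _ fun _ => hX _),
    Measure.map_map (measurable_pi_apply 0) (measurable_pi_lambda _ fun _ => hX _)] at h

section Sample

variable {Ω : Type*} (X : ℕ → Ω → ℝ) (n : ℕ) (ω : Ω)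

theorem empCDF_nonneg (x : ℝ) : 0 ≤ empCDF X n ω x :=
  mul_nonneg (by positivity) (Finset.sum_nonneg fun _ _ => by split_ifs <;> norm_num)

theorem empCDF_le_one (x : ℝ) : empCDF X n ω x ≤ 1 := by
  rcases n.eq_zero_or_pos with rfl | hn
  · simp [empCDF]
  rw [empCDF, inv_mul_le_one₀ (by exact_mod_cast hn)]
  calc ∑ t ∈ Finset.Icc 1 n, (if X t ω ≤ x then (1 : ℝ) else 0)
      ≤ ∑ t ∈ Finset.Icc 1 n, (1 : ℝ) := Finset.sum_le_sum fun _ _ => by split_ifs <;> norm_num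
    _ = n := by simp

theorem exists_mem_Icc_of_iSup_lt (μ : Measure ℝ) [IsProbabilityMeasure μ] {c d : ℝ}
    (h : ⨆ x, |empCDF X n ω x - cdf μ x| < (cdf μ d - cdf μ c) / 2) :
    ∃ t ∈ Finset.Icc 1 n, X t ω ∈ Icc c d := by
  by_contra! hmiss
  have hbdd : BddAbove (range fun x => |empCDF X n ω x - cdf μ x|) := by
    refine ⟨2, forall_mem_range.2 fun x => abs_le.2 ⟨?_, ?_⟩⟩ <;>
      linarith [empCDF_nonneg X n ω x, empCDF_le_one X n ω x, cdf_nonneg μ x, cdf_le_one μ x]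
  have hflat : empCDF X n ω d ≤ empCDF X n ω c := by
    refine mul_le_mul_of_nonneg_left (Finset.sum_le_sum fun t ht => ?_) (by positivity)
    by_cases hd : X t ω ≤ d
    · rw [if_pos hd, if_pos (not_lt.1 fun hc => hmiss t ht ⟨hc.le, hd⟩)]
    · rw [if_neg hd]; split_ifs <;> norm_num
  have hc := (le_abs_self _).trans (le_ciSup hbdd c)
  have hd := (neg_abs_le (empCDF X n ω d - cdf μ d)).trans' (neg_le_neg (le_ciSup hbdd d))
  linarith

noncomputable def sortedSample : List ℝ :=
  List.insertionSort (· ≤ ·) ((List.range n).map fun s => X (s + 1) ω)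

theorem length_sortedSample : (sortedSample X n ω).length = n := by
  simp [sortedSample, List.length_insertionSort]

theorem sortedLE_sortedSample : (sortedSample X n ω).SortedLE :=
  List.sortedLE_insertionSort

theorem mem_sortedSample {x : ℝ} :
    x ∈ sortedSample X n ω ↔ ∃ t ∈ Finset.Icc 1 n, X t ω = x := by
  simp only [sortedSample, List.mem_insertionSort, List.mem_map, List.mem_range, Finset.mem_Icc]
  constructor
  · rintro ⟨s, hs, rfl⟩
    exact ⟨s + 1, ⟨by omega, hs⟩, rfl⟩
  · rintro ⟨t, ⟨ht₁, htn⟩, rfl⟩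
    exact ⟨t - 1, by omega, by rw [Nat.sub_add_cancel ht₁]⟩

end Sample

theorem StrictlyStationary.ae_forall_mem_sortedSample {Ω : Type*} [MeasurableSpace Ω]
    {P : Measure Ω} [IsProbabilityMeasure P] {X : ℕ → Ω → ℝ} (hss : StrictlyStationary P X)
    (hX : ∀ t, Measurable (X t)) :
    ∀ᵐ ω ∂P, ∀ n, ∀ x ∈ sortedSample X n ω, lowerEnd (cdf (P.map (X 1))) ≤ x ∧
      (x : EReal) ≤ upperEnd (cdf (P.map (X 1))) := by
  have := Measure.isProbabilityMeasure_map (μ := P) (hX 1).aemeasurable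
  have hsupp : ∀ s, ∀ᵐ ω ∂P, lowerEnd (cdf (P.map (X 1))) ≤ X (1 + s) ω ∧
      (X (1 + s) ω : EReal) ≤ upperEnd (cdf (P.map (X 1))) := fun s => by
    have h : ∀ᵐ (x : ℝ) ∂P.map (X (1 + s)), lowerEnd (cdf (P.map (X 1))) ≤ x ∧
        (x : EReal) ≤ upperEnd (cdf (P.map (X 1))) := by
      rw [hss.map_eq hX s]
      exact ae_lowerEnd_le_and_le_upperEnd _
    exact ae_of_ae_map (hX _).aemeasurable h
  filter_upwards [ae_all_iff.2 hsupp] with ω hω n x hx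
  obtain ⟨t, ht, rfl⟩ := (mem_sortedSample X n ω).1 hx
  simpa [Nat.add_sub_cancel' (Finset.mem_Icc.1 ht).1] using hω (t - 1)

theorem List.SortedLE.getD_le_getD {α : Type*} [Preorder α] {l : List α} (hl : l.SortedLE)
    (d : α) {i j : ℕ} (hij : i ≤ j) (hj : j < l.length) : l.getD i d ≤ l.getD j d := by
  rw [List.getD_eq_getElem _ _ (hij.trans_lt hj), List.getD_eq_getElem _ _ hj]
  exact hl.getElem_le_getElem_of_le hij

theorem List.SortedLE.lt_of_getD_lt_getD {α : Type*} [Preorder α] {l : List α} (hl : l.SortedLE)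
    (d : α) {i j : ℕ} (hi : i < l.length) (h : l.getD i d < l.getD j d) : i < j := by
  by_contra! hji
  exact (hl.getD_le_getD d hji hi).not_gt h

noncomputable def pathVariation (h : ℝ → ℝ) (l : List ℝ) : ℝ :=
  ∑ j ∈ Finset.range (l.length - 1), |h (l.getD (j + 1) 0) - h (l.getD j 0)|

theorem pathVariation_nonneg (h : ℝ → ℝ) (l : List ℝ) : 0 ≤ pathVariation h l :=
  Finset.sum_nonneg fun _ _ => abs_nonneg _

theorem sum_orderStat_eq_pathVariation {Ω : Type*} (h : ℝ → ℝ) (X : ℕ → Ω → ℝ) (n : ℕ) (ω : Ω) :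
    ∑ t ∈ Finset.Icc 2 n, |h (orderStat X n t ω) - h (orderStat X n (t - 1) ω)| =
      pathVariation h (sortedSample X n ω) := by
  rw [pathVariation, length_sortedSample, ← Finset.Ico_add_one_right_eq_Icc,
    Finset.sum_Ico_eq_sum_range, show n + 1 - 2 = n - 1 by omega]
  refine Finset.sum_congr rfl fun j _ => ?_
  change |h ((sortedSample X n ω).getD (2 + j - 1) 0) -
    h ((sortedSample X n ω).getD (2 + j - 1 - 1) 0)| = _
  rw [show 2 + j - 1 = j + 1 by omega, show j + 1 - 1 = j by omega]

theorem pathVariation_le_integral_abs {g h : ℝ → ℝ} {l : List ℝ} (hg : Integrable g)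
    (hl : l.SortedLE) (hh : ∀ x ∈ l, ∀ y ∈ l, x ≤ y → h y - h x = ∫ t in x..y, g t) :
    pathVariation h l ≤ ∫ x, |g x| := by
  set u : ℕ → ℝ := fun j => l.getD j 0
  have hstep : ∀ j ∈ Finset.range (l.length - 1),
      |h (u (j + 1)) - h (u j)| ≤ ∫ x in u j..u (j + 1), |g x| := fun j hj => by
    have hj : j + 1 < l.length := by rw [Finset.mem_range] at hj; omega
    have hmem : ∀ i < l.length, u i ∈ l := fun i hi => by
      simp only [u, List.getD_eq_getElem _ _ hi, List.getElem_mem]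
    have hle : u j ≤ u (j + 1) := hl.getD_le_getD 0 j.le_succ hj
    rw [hh _ (hmem j (by omega)) _ (hmem _ hj) hle]
    exact intervalIntegral.abs_integral_le_integral_abs hle
  calc pathVariation h l ≤ ∑ j ∈ Finset.range (l.length - 1), ∫ x in u j..u (j + 1), |g x| :=
        Finset.sum_le_sum hstep
    _ = ∫ x in u 0..u (l.length - 1), |g x| :=
        intervalIntegral.sum_integral_adjacent_intervals fun _ _ => hg.abs.intervalIntegrable
    _ ≤ ∫ x in Ι (u 0) (u (l.length - 1)), |g x| := by
        simpa only [Real.norm_eq_abs, abs_abs] using (le_abs_self _).trans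
          (intervalIntegral.norm_integral_le_integral_norm_uIoc (f := fun x => |g x|))
    _ ≤ ∫ x, |g x| := setIntegral_le_integral hg.abs (Eventually.of_forall fun _ => abs_nonneg _)

theorem sum_abs_sub_comp_le_pathVariation (h : ℝ → ℝ) {l : List ℝ} {k : ℕ → ℕ} {K : ℕ}
    (hk : MonotoneOn k (Iic K)) (hK : k K < l.length) :
    ∑ i ∈ Finset.range K, |h (l.getD (k (i + 1)) 0) - h (l.getD (k i) 0)| ≤ pathVariation h l :=
  (sum_abs_sub_comp_le_sum_Ico (fun j => h (l.getD j 0)) hk).trans <|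
    Finset.sum_le_sum_of_subset_of_nonneg
      (fun j hj => by simp only [Finset.mem_Ico, Finset.mem_range] at hj ⊢; omega)
      fun _ _ _ => abs_nonneg _

theorem exists_forall_mem_window_integral_abs_le_pathVariation {g h : ℝ → ℝ} {a b ε : ℝ}
    (hab : a < b) (hg : ContinuousOn g (Icc a b))
    (hh : ∀ u v, a ≤ u → u ≤ v → v ≤ b → h v - h u = ∫ x in u..v, g x) (hε : 0 < ε) :
    ∃ K : ℕ, ∀ l : List ℝ, l.SortedLE → (∀ i ≤ K, ∃ x ∈ l, x ∈ window a b K i) →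
      (∫ x in a..b, |g x|) - ε ≤ pathVariation h l := by
  obtain ⟨K, hK⟩ := exists_forall_mem_window_integral_abs_le hab hg hε
  refine ⟨K, fun l hl hwin => ?_⟩
  have hidx : ∀ i, ∃ j, i ≤ K → j < l.length ∧ l.getD j 0 ∈ window a b K i := fun i => by
    by_cases hi : i ≤ K
    · obtain ⟨x, hxl, hx⟩ := hwin i hi
      obtain ⟨j, hj, rfl⟩ := List.mem_iff_getElem.1 hxl
      exact ⟨j, fun _ => ⟨hj, by rwa [List.getD_eq_getElem _ _ hj]⟩⟩
    · exact ⟨0, fun h => absurd h hi⟩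
  choose k hk using hidx
  set w : ℕ → ℝ := fun i => l.getD (k i) 0
  have hw : ∀ i ≤ K, w i ∈ window a b K i := fun i hi => (hk i hi).2
  have hwab : ∀ i ≤ K, w i ∈ Icc a b := fun i hi => window_subset_Icc hab.le hi (hw i hi)
  have hkmono : MonotoneOn k (Iic K) := fun i hi j hj hij => by
    rcases hij.eq_or_lt with rfl | hlt
    · exact le_rfl
    · exact (hl.lt_of_getD_lt_getD 0 (hk i hi).1
        (lt_of_mem_window hab hlt (hw i hi) (hw j hj))).le
  calc (∫ x in a..b, |g x|) - ε ≤ ∑ i ∈ Finset.range K, |∫ x in w i..w (i + 1), g x| := hK w hw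
    _ = ∑ i ∈ Finset.range K, |h (w (i + 1)) - h (w i)| := by
        refine Finset.sum_congr rfl fun i hi => ?_
        have hi : i < K := Finset.mem_range.1 hi
        rw [hh _ _ (hwab i hi.le).1 ((lt_of_mem_window hab (Nat.lt_succ_self i) (hw i hi.le)
          (hw (i + 1) hi)).le) (hwab (i + 1) hi).2]
    _ ≤ pathVariation h l := sum_abs_sub_comp_le_pathVariation h hkmono (hk K le_rfl).1

theorem exists_pos_forall_iSup_lt_integral_abs_le_pathVariation {Ω : Type*} (X : ℕ → Ω → ℝ)
    (μ : Measure ℝ) [IsProbabilityMeasure μ] (hq : ContinuousOn (quantile (cdf μ)) (Ioo 0 1))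
    {a b : ℝ} (hab : a ≤ b) (ha : lowerEnd (cdf μ) ≤ a) (hb : b ≤ upperEnd (cdf μ))
    {g h : ℝ → ℝ} (hg : ContinuousOn g (Icc a b))
    (hh : ∀ u v, a ≤ u → u ≤ v → v ≤ b → h v - h u = ∫ x in u..v, g x) {ε : ℝ} (hε : 0 < ε) :
    ∃ δ > 0, ∀ n ω, ⨆ x, |empCDF X n ω x - cdf μ x| < δ →
      (∫ x in a..b, |g x|) - ε ≤ pathVariation h (sortedSample X n ω) := by
  rcases hab.eq_or_lt with rfl | hab
  · refine ⟨1, one_pos, fun n ω _ => ?_⟩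
    rw [intervalIntegral.integral_same, zero_sub]
    exact (neg_nonpos.2 hε.le).trans (pathVariation_nonneg _ _)
  obtain ⟨K, hK⟩ := exists_forall_mem_window_integral_abs_le_pathVariation hab hg hh hε
  set mass : ℕ → ℝ := fun i => (cdf μ (a + (2 * i + 1) * windowWidth a b K) -
    cdf μ (a + 2 * i * windowWidth a b K)) / 2
  have hmass : ∀ i ∈ Finset.range (K + 1), 0 < mass i := fun i hi => by
    have hw := windowWidth_pos (K := K) hab
    have hsub := window_subset_Icc hab.le (Nat.lt_succ_iff.1 (Finset.mem_range.1 hi))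
    have hlt : a + 2 * i * windowWidth a b K < a + (2 * i + 1) * windowWidth a b K := by
      nlinarith
    refine half_pos (sub_pos.2 (cdf_lt_cdf_of_continuousOn_quantile μ hq hlt
      (ha.trans (EReal.coe_le_coe (hsub (left_mem_Icc.2 hlt.le)).1))
      ((EReal.coe_le_coe (hsub (right_mem_Icc.2 hlt.le)).2).trans hb)))
  have hne : (Finset.range (K + 1)).Nonempty := Finset.nonempty_range_add_one
  refine ⟨(Finset.range (K + 1)).inf' hne mass, (Finset.lt_inf'_iff hne).2 hmass,
    fun n ω hsup => hK _ (sortedLE_sortedSample X n ω) fun i hi => ?_⟩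
  obtain ⟨t, ht, hXt⟩ := exists_mem_Icc_of_iSup_lt X n ω μ
    (hsup.trans_le (Finset.inf'_le mass (Finset.mem_range.2 (Nat.lt_succ_of_le hi))))
  exact ⟨X t ω, (mem_sortedSample X n ω).2 ⟨t, ht, rfl⟩, hXt⟩

theorem tendstoInProb_of_forall_exists_pos {Ω : Type*} [MeasurableSpace Ω] {P : Measure Ω}
    {S D : ℕ → Ω → ℝ} {c : ℝ}
    (hD : ∀ δ > 0, Tendsto (fun n => P {ω | δ ≤ D n ω}) atTop (𝓝 0))
    (hS : ∀ ε > 0, ∃ δ > 0, ∀ᵐ ω ∂P, ∀ n, D n ω < δ → |S n ω - c| < ε) :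
    TendstoInProb P S c := fun ε hε => by
  obtain ⟨δ, hδ, hSδ⟩ := hS ε hε
  refine tendsto_of_tendsto_of_tendsto_of_le_of_le tendsto_const_nhds (hD δ hδ)
    (fun _ => zero_le) fun n => measure_mono_ae ?_
  filter_upwards [hSδ] with ω hω
  exact fun hεω => not_lt.1 fun hlt => (hω n hlt).not_ge hεω

theorem stmt_6_general {Ω : Type*} [MeasurableSpace Ω] (P : Measure Ω) [IsProbabilityMeasure P]
    (X : ℕ → Ω → ℝ) (hmeas : ∀ t, Measurable (X t))
    (hss : StrictlyStationary P X)
    (hgc : GlivenkoCantelliProp P X (cdfOf P (X 1)))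
    (hqcont : ContinuousOn (quantile (cdfOf P (X 1))) (Set.Ioo 0 1))
    (h0 h0star : ℝ → ℝ)
    (hAC : ∀ u v : ℝ, u ≤ v →
      lowerEnd (cdfOf P (X 1)) ≤ (u : EReal) → (v : EReal) ≤ upperEnd (cdfOf P (X 1)) →
      h0 v - h0 u = ∫ x in Set.Icc u v, h0star x)
    (a b : ℝ) (hab : a ≤ b)
    (ha : lowerEnd (cdfOf P (X 1)) ≤ (a : EReal)) (hb : (b : EReal) ≤ upperEnd (cdfOf P (X 1)))
    (hderiv_cont : ContinuousOn h0star (Set.Icc a b))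
    (hderiv_zero : ∀ x : ℝ, x ∉ Set.Icc a b → h0star x = 0) :
    TendstoInProb P
      (fun n ω => ∑ t ∈ Finset.Icc 2 n,
        |h0 (orderStat X n t ω) - h0 (orderStat X n (t - 1) ω)|)
      (∫ x in Set.Icc a b, |h0star x|) := by
  have := Measure.isProbabilityMeasure_map (μ := P) (hmeas 1).aemeasurable
  rw [cdfOf_eq_cdf_map (hmeas 1)] at hgc hqcont hAC ha hb
  have hAC' : ∀ u v : ℝ, u ≤ v → lowerEnd (cdf (P.map (X 1))) ≤ u →
      (v : EReal) ≤ upperEnd (cdf (P.map (X 1))) → h0 v - h0 u = ∫ x in u..v, h0star x :=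
    fun u v huv hu hv => by
      rw [hAC u v huv hu hv, integral_Icc_eq_integral_Ioc, intervalIntegral.integral_of_le huv]
  have hint : Integrable h0star :=
    hderiv_cont.integrableOn_Icc.integrable_of_forall_notMem_eq_zero hderiv_zero
  have hV : ∫ x, |h0star x| = ∫ x in a..b, |h0star x| := by
    rw [← setIntegral_eq_integral_of_forall_compl_eq_zero fun x hx => by simp [hderiv_zero x hx],
      integral_Icc_eq_integral_Ioc, intervalIntegral.integral_of_le hab]
  rw [integral_Icc_eq_integral_Ioc, ← intervalIntegral.integral_of_le hab]
  refine tendstoInProb_of_forall_exists_pos hgc fun ε hε => ?_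
  obtain ⟨δ, hδ, hlower⟩ := exists_pos_forall_iSup_lt_integral_abs_le_pathVariation X _ hqcont
    hab ha hb hderiv_cont (fun u v hu huv hv => hAC' u v huv (ha.trans (EReal.coe_le_coe hu))
      ((EReal.coe_le_coe hv).trans hb)) (half_pos hε)
  refine ⟨δ, hδ, ?_⟩
  filter_upwards [hss.ae_forall_mem_sortedSample hmeas] with ω hsupp n hn
  have hupper := pathVariation_le_integral_abs hint (sortedLE_sortedSample X n ω)
    fun x hx y hy hxy => hAC' x y hxy (hsupp n x hx).1 (hsupp n y hy).2
  rw [sum_orderStat_eq_pathVariation, abs_lt]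
  constructor <;> linarith [hlower n ω hn]

theorem stmt_6 {Ω : Type*} [MeasurableSpace Ω] (P : Measure Ω) [IsProbabilityMeasure P]
    (X : ℕ → Ω → ℝ) (hmeas : ∀ t, Measurable (X t))
    (hss : StrictlyStationary P X)
    (htd : TemperatelyDependent P X (cdfOf P (X 1)))
    (hgc : GlivenkoCantelliProp P X (cdfOf P (X 1)))
    (p : ℝ) (hp : 2 < p)
    (hmom : Integrable (fun ω => |X 1 ω| ^ p) P)
    (hcont : Continuous (cdfOf P (X 1)))
    (hqcont : ContinuousOn (quantile (cdfOf P (X 1))) (Set.Ioo 0 1))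
    (h0 h0star : ℝ → ℝ)
    (hAC : ∀ u v : ℝ, u ≤ v →
      lowerEnd (cdfOf P (X 1)) ≤ (u : EReal) → (v : EReal) ≤ upperEnd (cdfOf P (X 1)) →
      h0 v - h0 u = ∫ x in Set.Icc u v, h0star x)
    (a b : ℝ) (hab : a ≤ b)
    (ha : lowerEnd (cdfOf P (X 1)) ≤ (a : EReal)) (hb : (b : EReal) ≤ upperEnd (cdfOf P (X 1)))
    (hderiv_cont : ContinuousOn h0star (Set.Icc a b))
    (hderiv_zero : ∀ x : ℝ, x ∉ Set.Icc a b → h0star x = 0) :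
    TendstoInProb P
      (fun n ω => ∑ t ∈ Finset.Icc 2 n,
        |h0 (orderStat X n t ω) - h0 (orderStat X n (t - 1) ω)|)
      (∫ x in Set.Icc a b, |h0star x|) :=
  stmt_6_general P X hmeas hss hgc hqcont h0 h0star hAC a b hab ha hb hderiv_cont hderiv_zero
end

section
/- Let (X_t)_{t≥1} be a strictly stationary, temperately dependent sequence of real random variables satisfying the Glivenko–Cantelli property, whose common cdf F and quantile function F^{-1} are both continuous, and let [a, b] be any finite subinterval of [a_X, b_X]. Define Z_{0,n} := a, Z_{n+1,n} := b, and for t = 1, …, n, Z_{t,n} := min(max(X_{t:n}, a), b) (the clamp of the t-th order statistic to [a, b]). Then max_{1≤t≤n+1} (Z_{t,n} − Z_{t-1,n}) → 0 in probability as n → ∞. -/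
open MeasureTheory ProbabilityTheory Filter
open scoped Classical

/-- `Z_{t,n}`: the order statistics clamped to `[a, b]`, with the conventions
`Z_{0,n} = a` and `Z_{n+1,n} = b`. -/
noncomputable def clampOS {Ω : Type*} (X : ℕ → Ω → ℝ) (a b : ℝ) (n t : ℕ) (ω : Ω) : ℝ :=
  if t = 0 then a else if t = n + 1 then b else min (max (orderStat X n t ω) a) b

open Set

/-!
If some spacing of the clamped order statistics is at least `ε`, the sample misses an interval
`(c, c + ε)` with `c ∈ [a, b - ε]`, so the empirical cdf `F_n` does not increase on `[c, c + ε/2]`.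
Continuity of the quantile function forces `F` to be strictly increasing on `[a, b]`, so by
compactness `F` increases by some `δ > 0` over each such half-interval. Then
`sup |F_n - F| ≥ δ/2` on the event, whose probability therefore tends to `0` by the
Glivenko–Cantelli property.
-/

lemma cdfOf_eq_cdf {Ω : Type*} [MeasurableSpace Ω] (P : Measure Ω) [IsProbabilityMeasure P]
    {X : Ω → ℝ} (hX : Measurable X) : cdfOf P X = cdf (P.map X) := by
  have : IsProbabilityMeasure (P.map X) := Measure.isProbabilityMeasure_map hX.aemeasurable
  funext x
  rw [cdf_eq_real, Measure.real, cdfOf, Measure.map_apply hX measurableSet_Iic]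
  rfl

section Quantile

variable {μ : Measure ℝ}

lemma quantile_cdf_le {x : ℝ} (hx : 0 < cdf μ x) : quantile (cdf μ) (cdf μ x) ≤ x := by
  obtain ⟨w, hw⟩ : ∃ w, cdf μ w < cdf μ x :=
    ((tendsto_cdf_atBot μ).eventually_lt_const hx).exists
  refine csInf_le ⟨w, fun z hz => ?_⟩ (le_refl (cdf μ x))
  by_contra! hzw
  exact hw.not_ge (hz.trans (monotone_cdf μ hzw.le))

lemma le_quantile_cdf {y q : ℝ} (hyq : cdf μ y < q) (hq : q < 1) :
    y ≤ quantile (cdf μ) q := by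
  obtain ⟨z, hz⟩ : ∃ z, q < cdf μ z := ((tendsto_cdf_atTop μ).eventually_const_lt hq).exists
  refine le_csInf ⟨z, hz.le⟩ fun w hw => ?_
  by_contra! hwy
  exact (hw.trans (monotone_cdf μ hwy.le)).not_gt hyq

/-- A flat piece of the cdf at a level `p ∈ (0, 1)` is a jump of the quantile function at `p`. -/
lemma cdf_lt_cdf_of_continuousWithinAt_quantile {x y : ℝ} (hxy : x < y)
    (hq : ContinuousWithinAt (quantile (cdf μ)) (Ioi (cdf μ x)) (cdf μ x))
    (h0 : 0 < cdf μ x) (h1 : cdf μ x < 1) : cdf μ x < cdf μ y := by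
  by_contra! h
  have heq : cdf μ y = cdf μ x := le_antisymm h (monotone_cdf μ hxy.le)
  have hyq : y ≤ quantile (cdf μ) (cdf μ x) := ge_of_tendsto hq <| by
    filter_upwards [Ioo_mem_nhdsGT h1] with q hq using le_quantile_cdf (heq ▸ hq.1) hq.2
  linarith [quantile_cdf_le h0]

theorem strictMonoOn_cdf_of_continuousOn_quantile
    (hq : ContinuousOn (quantile (cdf μ)) (Ioo 0 1)) {a b : ℝ}
    (ha : lowerEnd (cdf μ) ≤ (a : EReal)) (hb : (b : EReal) ≤ upperEnd (cdf μ)) :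
    StrictMonoOn (cdf μ) (Icc a b) := by
  intro x hx y hy hxy
  have hy0 : cdf μ y ≠ 0 := fun h => by
    have : (y : EReal) ≤ lowerEnd (cdf μ) := le_sSup ⟨y, h, rfl⟩
    linarith [hx.1, EReal.coe_le_coe_iff.mp (this.trans ha)]
  have hx1 : cdf μ x ≠ 1 := fun h => by
    have : upperEnd (cdf μ) ≤ x := sInf_le ⟨x, h, rfl⟩
    linarith [hy.2, EReal.coe_le_coe_iff.mp (hb.trans this)]
  rcases (cdf_nonneg μ x).eq_or_lt with h0 | h0
  · exact h0 ▸ (cdf_nonneg μ y).lt_of_ne' hy0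
  have h1 := (cdf_le_one μ x).lt_of_ne hx1
  exact cdf_lt_cdf_of_continuousWithinAt_quantile hxy
    (hq.continuousAt (Ioo_mem_nhds h0 h1)).continuousWithinAt h0 h1

end Quantile

section OrderStatistics

variable {Ω : Type*} (X : ℕ → Ω → ℝ) (n : ℕ) (ω : Ω)

lemma orderStat_mono {u v : ℕ} (hu : 1 ≤ u) (huv : u ≤ v) (hv : v ≤ n) :
    orderStat X n u ω ≤ orderStat X n v ω := by
  unfold orderStat
  set S := List.insertionSort (· ≤ ·) ((List.range n).map fun s => X (s + 1) ω)
  have hlen : S.length = n := by simp [S]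
  rw [List.getD_eq_get _ _ ⟨u - 1, by omega⟩, List.getD_eq_get _ _ ⟨v - 1, by omega⟩]
  exact (List.pairwise_insertionSort _ _).rel_get_of_le (by simp [Fin.le_def]; omega)

lemma exists_orderStat_eq {s : ℕ} (hs1 : 1 ≤ s) (hsn : s ≤ n) :
    ∃ j, 1 ≤ j ∧ j ≤ n ∧ orderStat X n j ω = X s ω := by
  set S := List.insertionSort (· ≤ ·) ((List.range n).map fun s => X (s + 1) ω)
  have hlen : S.length = n := by simp [S]
  have hmem : X s ω ∈ S := by
    rw [List.mem_insertionSort, List.mem_map]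
    exact ⟨s - 1, List.mem_range.2 (by omega), by rw [Nat.sub_add_cancel hs1]⟩
  obtain ⟨j, hj⟩ := List.mem_iff_get.1 hmem
  refine ⟨j + 1, by omega, by omega, ?_⟩
  rw [orderStat, Nat.add_sub_cancel]
  exact (List.getD_eq_get _ _ j).trans hj

variable {a b : ℝ}

lemma clampOS_of_ne {t : ℕ} (h0 : t ≠ 0) (hn : t ≠ n + 1) :
    clampOS X a b n t ω = min (max (orderStat X n t ω) a) b := by
  simp [clampOS, h0, hn]

lemma clampOS_mem_Icc (hab : a ≤ b) (t : ℕ) : clampOS X a b n t ω ∈ Icc a b := by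
  unfold clampOS
  split_ifs
  · exact ⟨le_rfl, hab⟩
  · exact ⟨hab, le_rfl⟩
  · exact ⟨le_min (le_max_right _ _) hab, min_le_right _ _⟩

lemma clampOS_mono (hab : a ≤ b) {u v : ℕ} (huv : u ≤ v) (hv : v ≤ n + 1) :
    clampOS X a b n u ω ≤ clampOS X a b n v ω := by
  rcases Nat.eq_zero_or_pos u with rfl | hu
  · exact (clampOS_mem_Icc X n ω hab v).1
  rcases hv.eq_or_lt with rfl | hv
  · simpa [clampOS] using (clampOS_mem_Icc X n ω hab u).2
  rw [clampOS_of_ne X n ω (by omega) (by omega), clampOS_of_ne X n ω (by omega) (by omega)]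
  gcongr
  exact orderStat_mono X n ω hu huv (by omega)

/-- The largest spacing `max_{1 ≤ t ≤ n+1} (Z_{t,n} - Z_{t-1,n})` of the clamped order statistics. -/
noncomputable def maxSpacing (a b : ℝ) (n : ℕ) (ω : Ω) : ℝ :=
  (Finset.Icc 1 (n + 1)).sup' (Finset.nonempty_Icc.mpr (Nat.le_add_left 1 n))
    (fun t => clampOS X a b n t ω - clampOS X a b n (t - 1) ω)

lemma maxSpacing_nonneg (hab : a ≤ b) : 0 ≤ maxSpacing X a b n ω :=
  Finset.le_sup'_of_le _ (b := 1) (by simp)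
    (sub_nonneg.2 (clampOS_mono X n ω hab (Nat.zero_le _) (by omega)))

lemma exists_forall_notMem_Ioo_of_le_maxSpacing (hab : a ≤ b) {ε : ℝ}
    (h : ε ≤ maxSpacing X a b n ω) :
    ∃ c ∈ Icc a (b - ε), ∀ s, 1 ≤ s → s ≤ n → X s ω ∉ Ioo c (c + ε) := by
  obtain ⟨t, ht, hgap⟩ := (Finset.le_sup'_iff _).1 h
  rw [Finset.mem_Icc] at ht
  have hc := clampOS_mem_Icc X n ω hab (t - 1)
  have hd := clampOS_mem_Icc X n ω hab t
  refine ⟨clampOS X a b n (t - 1) ω, ⟨hc.1, by linarith [hd.2]⟩, ?_⟩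
  rintro s hs1 hsn ⟨hlo, hhi⟩
  obtain ⟨j, hj1, hjn, hj⟩ := exists_orderStat_eq X n ω hs1 hsn
  have hZj : clampOS X a b n j ω = X s ω := by
    rw [clampOS_of_ne X n ω (by omega) (by omega), hj, max_eq_left (by linarith [hc.1]),
      min_eq_left (by linarith [hd.2])]
  rcases le_or_gt j (t - 1) with hjt | hjt
  · linarith [clampOS_mono X n ω hab hjt (by omega)]
  · linarith [clampOS_mono X n ω hab (show t ≤ j by omega) (by omega)]

end OrderStatistics

section EmpiricalCDF

variable {Ω : Type*} (X : ℕ → Ω → ℝ) (n : ℕ) (ω : Ω)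

lemma empCDF_mem_Icc (x : ℝ) : empCDF X n ω x ∈ Icc 0 1 := by
  have hsum : ∑ t ∈ Finset.Icc 1 n, (if X t ω ≤ x then (1 : ℝ) else 0) ≤ n := by
    have := Finset.sum_le_card_nsmul (Finset.Icc 1 n) (fun t => if X t ω ≤ x then (1 : ℝ) else 0)
      1 fun t _ => by split_ifs <;> norm_num
    rwa [Nat.card_Icc, add_tsub_cancel_right, nsmul_one] at this
  refine ⟨mul_nonneg (by positivity) (Finset.sum_nonneg fun t _ => by split_ifs <;> norm_num), ?_⟩
  rcases Nat.eq_zero_or_pos n with rfl | hn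
  · simp [empCDF]
  · exact (inv_mul_le_iff₀ (by positivity)).2 (by simpa using hsum)

lemma empCDF_le_empCDF_of_forall_notMem_Ioc {c d : ℝ}
    (h : ∀ s, 1 ≤ s → s ≤ n → X s ω ∉ Ioc c d) : empCDF X n ω d ≤ empCDF X n ω c := by
  refine mul_le_mul_of_nonneg_left (Finset.sum_le_sum fun t ht => ?_) (by positivity)
  rw [Finset.mem_Icc] at ht
  by_cases hd : X t ω ≤ d
  · have hc : X t ω ≤ c := not_lt.1 fun hc => h t ht.1 ht.2 ⟨hc, hd⟩
    simp [hd, hc]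
  · simp only [if_neg hd]
    split_ifs <;> norm_num

lemma sub_le_two_mul_iSup_abs_empCDF_sub {F : ℝ → ℝ} (hF : ∀ x, F x ∈ Icc 0 1) {c d : ℝ}
    (h : empCDF X n ω d ≤ empCDF X n ω c) :
    F d - F c ≤ 2 * ⨆ x, |empCDF X n ω x - F x| := by
  have hbdd : BddAbove (range fun x => |empCDF X n ω x - F x|) := by
    refine ⟨1, forall_mem_range.2 fun x => abs_le.2 ⟨?_, ?_⟩⟩ <;>
      linarith [(hF x).1, (hF x).2, (empCDF_mem_Icc X n ω x).1, (empCDF_mem_Icc X n ω x).2]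
  have hc := (le_abs_self _).trans (le_ciSup hbdd c)
  have hd := (neg_le_abs _).trans (le_ciSup hbdd d)
  linarith

end EmpiricalCDF

theorem stmt_8_general {Ω : Type*} [MeasurableSpace Ω] (P : Measure Ω) [IsProbabilityMeasure P]
    (X : ℕ → Ω → ℝ) (hmeas : ∀ t, Measurable (X t))
    (hgc : GlivenkoCantelliProp P X (cdfOf P (X 1)))
    (hcont : Continuous (cdfOf P (X 1)))
    (hqcont : ContinuousOn (quantile (cdfOf P (X 1))) (Set.Ioo 0 1))
    (a b : ℝ) (hab : a ≤ b)
    (ha : lowerEnd (cdfOf P (X 1)) ≤ (a : EReal)) (hb : (b : EReal) ≤ upperEnd (cdfOf P (X 1))) :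
    TendstoInProb P
      (fun n ω => (Finset.Icc 1 (n + 1)).sup' (Finset.nonempty_Icc.mpr (Nat.le_add_left 1 n))
        (fun t => clampOS X a b n t ω - clampOS X a b n (t - 1) ω)) 0 := by
  change TendstoInProb P (maxSpacing X a b) 0
  intro ε hε
  rw [cdfOf_eq_cdf P (hmeas 1)] at hgc hcont hqcont ha hb
  set μ := P.map (X 1)
  have hstrict := strictMonoOn_cdf_of_continuousOn_quantile hqcont ha hb
  obtain ⟨δ, hδ, hincr⟩ : ∃ δ > 0, ∀ c ∈ Icc a (b - ε), δ ≤ cdf μ (c + ε / 2) - cdf μ c :=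
    isCompact_Icc.exists_forall_le' ((hcont.comp (continuous_add_const _)).sub hcont).continuousOn
      fun c hc => sub_pos.2 <| hstrict ⟨hc.1, by linarith [hc.2]⟩
        ⟨by linarith [hc.1], by linarith [hc.2]⟩ (by linarith)
  refine tendsto_of_tendsto_of_tendsto_of_le_of_le tendsto_const_nhds
    (hgc (δ / 2) (by positivity)) (fun _ => zero_le) fun n => measure_mono fun ω hω => ?_
  replace hω : ε ≤ |maxSpacing X a b n ω - 0| := hω
  rw [sub_zero, abs_of_nonneg (maxSpacing_nonneg X n ω hab)] at hω
  obtain ⟨c, hc, hgap⟩ := exists_forall_notMem_Ioo_of_le_maxSpacing X n ω hab hω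
  have hflat : empCDF X n ω (c + ε / 2) ≤ empCDF X n ω c :=
    empCDF_le_empCDF_of_forall_notMem_Ioc X n ω fun s hs1 hsn hs =>
      hgap s hs1 hsn ⟨hs.1, by linarith [hs.2]⟩
  have hsup := sub_le_two_mul_iSup_abs_empCDF_sub X n ω
    (fun x => ⟨cdf_nonneg μ x, cdf_le_one μ x⟩) hflat
  show δ / 2 ≤ _
  linarith [hincr c hc]

theorem stmt_8 {Ω : Type*} [MeasurableSpace Ω] (P : Measure Ω) [IsProbabilityMeasure P]
    (X : ℕ → Ω → ℝ) (hmeas : ∀ t, Measurable (X t))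
    (hss : StrictlyStationary P X)
    (htd : TemperatelyDependent P X (cdfOf P (X 1)))
    (hgc : GlivenkoCantelliProp P X (cdfOf P (X 1)))
    (hcont : Continuous (cdfOf P (X 1)))
    (hqcont : ContinuousOn (quantile (cdfOf P (X 1))) (Set.Ioo 0 1))
    (a b : ℝ) (hab : a ≤ b)
    (ha : lowerEnd (cdfOf P (X 1)) ≤ (a : EReal)) (hb : (b : EReal) ≤ upperEnd (cdfOf P (X 1))) :
    TendstoInProb P
      (fun n ω => (Finset.Icc 1 (n + 1)).sup' (Finset.nonempty_Icc.mpr (Nat.le_add_left 1 n))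
        (fun t => clampOS X a b n t ω - clampOS X a b n (t - 1) ω)) 0 :=
  stmt_8_general P X hmeas hgc hcont hqcont a b hab ha hb
end
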